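/- arXiv:1107.4373 — 2 statements merged into one kernel-verified Lean document; each statement's English description precedes it below -/
import Mathlib

section
/- For a composition α = (α₁,…,α_l) of N and a partition λ of N, the number of LR fillings of the ribbon rib(α) with content λ equals the number of standard Young tableaux of shape λ with descent set S(α); equivalently, the skew Schur function of rib(α) expands as Σ_{λ ⊢ N} d_{λα} s_λ, where d_{λα} is the number of SYT of shape λ with descent set S(α). -/
/-- A skew shape `outer / inner`: the boxes of the Young diagram of `outer`
that are not boxes of the Young diagram of `inner`. -/
structure SkewShape where
  outer : YoungDiagram
  inner : YoungDiagram
  inner_le : inner ≤ outer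

namespace SkewShape

/-- The set of boxes of a skew shape. -/
def cells (A : SkewShape) : Finset (ℕ × ℕ) := A.outer.cells \ A.inner.cells

/-- The size of a skew shape is its number of boxes. -/
def size (A : SkewShape) : ℕ := A.cells.card

/-- The length of row `i` of a skew shape. -/
def rowLen (A : SkewShape) (i : ℕ) : ℕ := (A.cells.filter fun c => c.1 = i).card

/-- The length of column `j` of a skew shape. -/
def colLen (A : SkewShape) (j : ℕ) : ℕ := (A.cells.filter fun c => c.2 = j).card

/-- The set of indices of nonempty rows. -/
def rowSet (A : SkewShape) : Finset ℕ := A.cells.image Prod.fst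

/-- The set of indices of nonempty columns. -/
def colSet (A : SkewShape) : Finset ℕ := A.cells.image Prod.snd

/-- The number of nonempty rows. -/
def numRows (A : SkewShape) : ℕ := A.rowSet.card

/-- The number of nonempty columns. -/
def numCols (A : SkewShape) : ℕ := A.colSet.card

/-- `rows A`: the multiset of lengths of the nonempty rows of `A`
(equivalently, that sequence sorted into weakly decreasing order). -/
def rows (A : SkewShape) : Multiset ℕ := A.rowSet.val.map A.rowLen

/-- `cols A`: the multiset of lengths of the nonempty columns of `A`. -/
def cols (A : SkewShape) : Multiset ℕ := A.colSet.val.map A.colLen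

/-- A skew shape is disconnected if its boxes can be split into two nonempty
parts such that no box of one part shares a row or a column with a box of the
other part. -/
def Disconnected (A : SkewShape) : Prop :=
  ∃ B C : Finset (ℕ × ℕ), B.Nonempty ∧ C.Nonempty ∧ B ∪ C = A.cells ∧ B ∩ C = ∅ ∧
    ∀ b ∈ B, ∀ c ∈ C, b.1 ≠ c.1 ∧ b.2 ≠ c.2

/-- A skew shape is connected if it is nonempty and not disconnected. -/
def Connected (A : SkewShape) : Prop := A.cells.Nonempty ∧ ¬ A.Disconnected

/-- A ribbon is a connected skew shape containing no 2×2 block of boxes. -/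
def Ribbon (A : SkewShape) : Prop :=
  A.Connected ∧ ∀ i j : ℕ, ¬ ((i, j) ∈ A.cells ∧ (i, j + 1) ∈ A.cells ∧
    (i + 1, j) ∈ A.cells ∧ (i + 1, j + 1) ∈ A.cells)

/-- The lengths of any two nonempty rows differ by at most one. -/
def RowEquitable (A : SkewShape) : Prop :=
  ∀ i ∈ A.rowSet, ∀ i' ∈ A.rowSet, A.rowLen i ≤ A.rowLen i' + 1

/-- The lengths of any two nonempty columns differ by at most one. -/
def ColEquitable (A : SkewShape) : Prop :=
  ∀ j ∈ A.colSet, ∀ j' ∈ A.colSet, A.colLen j ≤ A.colLen j' + 1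

/-- Equitable: both row equitable and column equitable. -/
def Equitable (A : SkewShape) : Prop := A.RowEquitable ∧ A.ColEquitable

/-- A filling of a skew shape is semistandard if its entries are positive
integers, weakly increasing along rows and strictly increasing down columns. -/
def IsSsyt (A : SkewShape) (T : ℕ × ℕ → ℕ) : Prop :=
  (∀ c ∈ A.cells, 1 ≤ T c) ∧
  (∀ i j j', (i, j) ∈ A.cells → (i, j') ∈ A.cells → j ≤ j' → T (i, j) ≤ T (i, j')) ∧
  (∀ i i' j, (i, j) ∈ A.cells → (i', j) ∈ A.cells → i < i' → T (i, j) < T (i', j))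

end SkewShape

/-- `c` comes weakly before `d` in the reverse reading order (right to left
along rows, rows top to bottom). -/
def ReadsBefore (c d : ℕ × ℕ) : Prop := c.1 < d.1 ∨ (c.1 = d.1 ∧ d.2 ≤ c.2)

instance : DecidableRel ReadsBefore := fun c d => by unfold ReadsBefore; infer_instance

namespace SkewShape

/-- The number of boxes of `A` filled with the entry `k` by the filling `T`. -/
def content (A : SkewShape) (T : ℕ × ℕ → ℕ) (k : ℕ) : ℕ :=
  (A.cells.filter fun c => T c = k).card

/-- A Littlewood--Richardson filling: a semistandard filling such that every
prefix of the reverse reading word contains at least as many `k`'s as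
`(k+1)`'s, for every positive `k`. -/
def IsLR (A : SkewShape) (T : ℕ × ℕ → ℕ) : Prop :=
  A.IsSsyt T ∧ ∀ d ∈ A.cells, ∀ k : ℕ,
    (A.cells.filter fun c => T c = k + 2 ∧ ReadsBefore c d).card ≤
    (A.cells.filter fun c => T c = k + 1 ∧ ReadsBefore c d).card

end SkewShape

/-- The `i`-th largest part (0-indexed) of a multiset of natural numbers,
i.e. the `i`-th entry of the multiset sorted into weakly decreasing order. -/
def part (lam : Multiset ℕ) (i : ℕ) : ℕ := (lam.sort (· ≥ ·)).getD i 0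

namespace SkewShape

/-- The support of a skew shape `A`: the set of partitions `lam` (multisets of
positive integers) for which there exists an LR filling of `A` of content `lam`. -/
def supp (A : SkewShape) : Set (Multiset ℕ) :=
  {lam | 0 ∉ lam ∧ ∃ T : ℕ × ℕ → ℕ, A.IsLR T ∧ ∀ i : ℕ, A.content T (i + 1) = part lam i}

/-- The set of LR fillings of `A` of content `lam` (normalized to vanish
outside the boxes of `A`). -/
def LRset (A : SkewShape) (lam : Multiset ℕ) : Set ((ℕ × ℕ) → ℕ) :=
  {T | A.IsLR T ∧ (∀ c, c ∉ A.cells → T c = 0) ∧ ∀ i : ℕ, A.content T (i + 1) = part lam i}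

/-- `s_A − s_B` is Schur-positive: for every partition, the number of LR
fillings of `B` of that content is at most the number for `A`. -/
def SchurPosDiff (A B : SkewShape) : Prop :=
  ∀ lam : Multiset ℕ, (B.LRset lam).ncard ≤ (A.LRset lam).ncard

end SkewShape

/-- The sum of the `k` largest parts of a multiset of natural numbers. -/
def psum (lam : Multiset ℕ) (k : ℕ) : ℕ := ((lam.sort (· ≥ ·)).take k).sum

/-- Dominance order: `DomLe lam mu` means `lam ⊴ mu`, i.e. for every `k` the
sum of the `k` largest parts of `lam` is at most that of `mu`. -/
def DomLe (lam mu : Multiset ℕ) : Prop := ∀ k : ℕ, psum lam k ≤ psum mu k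

/-- The conjugate (transpose) of a partition given as a multiset: its parts
are the numbers `#{x ∈ lam | x ≥ j}` for `j = 1, 2, …`. -/
def conj (lam : Multiset ℕ) : Multiset ℕ :=
  ((Finset.range lam.sum).val.map fun j => Multiset.card (lam.filter fun x => j + 1 ≤ x)).filter
    fun y => y ≠ 0

/-- The boxes of the Young diagram of the partition `lam` (given as a multiset):
the box `(i, j)` is present exactly when `j` is less than the `i`-th largest
part of `lam`. -/
def straightCells (lam : Multiset ℕ) : Finset (ℕ × ℕ) :=
  (Finset.range (Multiset.card lam) ×ˢ Finset.range lam.sum).filter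
    fun c => c.2 < part lam c.1

/-- A standard Young tableau of straight shape `lam ⊢ N`: a filling of the boxes
of `lam` whose entries are exactly `1, …, N`, each occurring once, strictly
increasing along rows and down columns. -/
def IsSYT (lam : Multiset ℕ) (T : ℕ × ℕ → ℕ) : Prop :=
  (∀ c, c ∉ straightCells lam → T c = 0) ∧
  (∀ k, 1 ≤ k → k ≤ lam.sum → ((straightCells lam).filter fun c => T c = k).card = 1) ∧
  (∀ i j j', (i, j) ∈ straightCells lam → (i, j') ∈ straightCells lam → j < j' →
    T (i, j) < T (i, j')) ∧
  (∀ i i' j, (i, j) ∈ straightCells lam → (i', j) ∈ straightCells lam → i < i' →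
    T (i, j) < T (i', j))

/-- The descent set of a standard Young tableau: the set of entries `k` such
that `k + 1` lies in a strictly lower row than `k`. -/
def descentSet (lam : Multiset ℕ) (T : ℕ × ℕ → ℕ) : Set ℕ :=
  {k | ∃ c ∈ straightCells lam, ∃ d ∈ straightCells lam,
    T c = k ∧ T d = k + 1 ∧ c.1 < d.1}

/-- `S(α)`: the set of proper partial sums `α₁ + ⋯ + α_k`, `1 ≤ k ≤ l − 1`, of a
composition `α = (α₁, …, α_l)`. -/
def Sset (α : List ℕ) : Set ℕ :=
  {m | ∃ k, 0 < k ∧ k < α.length ∧ (α.take k).sum = m}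

namespace Gessel

open Finset

lemma ncard_eq_of_maps {X Y : Type*} (S1 : Set X) (S2 : Set Y) (f : X → Y) (g : Y → X)
    (h1 : ∀ x ∈ S1, f x ∈ S2) (h2 : ∀ y ∈ S2, g y ∈ S1)
    (h3 : ∀ x ∈ S1, g (f x) = x) (h4 : ∀ y ∈ S2, f (g y) = y) :
    S1.ncard = S2.ncard := by
  have hbij : Set.BijOn f S1 S2 :=
    ⟨h1, fun x hx x' hx' h => by rw [← h3 x hx, ← h3 x' hx', h],
      fun y hy => ⟨g y, h2 y hy, h4 y hy⟩⟩
  rw [← hbij.image_eq, Set.ncard_image_of_injOn hbij.injOn]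

lemma part_anti (lam : Multiset ℕ) {r r' : ℕ} (h : r ≤ r') : part lam r' ≤ part lam r := by
  rcases eq_or_lt_of_le h with rfl | h
  · exact le_refl _
  unfold part
  by_cases hr' : r' < (lam.sort (· ≥ ·)).length
  · have hr : r < (lam.sort (· ≥ ·)).length := h.trans hr'
    rw [List.getD_eq_get _ _ ⟨r', hr'⟩, List.getD_eq_get _ _ ⟨r, hr⟩]
    exact (Multiset.pairwise_sort lam (· ≥ ·)).rel_get_of_lt (by simpa using h)
  · rw [List.getD_eq_default _ _ (not_lt.1 hr')]
    exact Nat.zero_le _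

lemma part_pos_iff (lam : Multiset ℕ) (h0 : 0 ∉ lam) {r : ℕ} :
    0 < part lam r ↔ r < Multiset.card lam := by
  have hlen : (lam.sort (· ≥ ·)).length = Multiset.card lam := Multiset.length_sort _
  constructor
  · intro h
    by_contra hr
    rw [part, List.getD_eq_default] at h
    · simp at h
    · omega
  · intro hr
    rw [part, List.getD_eq_get _ _ ⟨r, by omega⟩]
    have : (lam.sort (· ≥ ·)).get ⟨r, by omega⟩ ∈ lam := by
      rw [← Multiset.mem_sort (r := (· ≥ ·))]
      exact List.get_mem _ _
    rcases Nat.eq_zero_or_pos ((lam.sort (· ≥ ·)).get ⟨r, by omega⟩) with hz | hp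
    · exact absurd (hz ▸ this) h0
    · exact hp

lemma part_le_sum (lam : Multiset ℕ) (r : ℕ) : part lam r ≤ lam.sum := by
  by_cases hr : r < (lam.sort (· ≥ ·)).length
  · rw [part, List.getD_eq_get _ _ ⟨r, hr⟩]
    refine Multiset.single_le_sum (fun x _ => Nat.zero_le x) _ ?_
    rw [← Multiset.mem_sort (r := (· ≥ ·))]
    exact List.get_mem _ _
  · rw [part, List.getD_eq_default _ _ (not_lt.1 hr)]
    exact Nat.zero_le _

lemma mem_straightCells (lam : Multiset ℕ) (h0 : 0 ∉ lam) (c : ℕ × ℕ) :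
    c ∈ straightCells lam ↔ c.2 < part lam c.1 := by
  unfold straightCells
  simp only [Finset.mem_filter, Finset.mem_product, Finset.mem_range]
  constructor
  · tauto
  · intro h
    refine ⟨⟨?_, ?_⟩, h⟩
    · exact (part_pos_iff lam h0).1 (Nat.pos_of_ne_zero (by omega))
    · exact lt_of_lt_of_le h (part_le_sum lam c.1)

end Gessel
namespace Gessel

lemma sum_getD (L : List ℕ) : ∑ i ∈ Finset.range L.length, L.getD i 0 = L.sum := by
  induction L with
  | nil => simp
  | cons a L ih =>
    rw [List.length_cons, Finset.sum_range_succ']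
    simp only [List.getD_cons_succ, List.getD_cons_zero, ih, List.sum_cons]
    omega

lemma card_straightCells (lam : Multiset ℕ) (h0 : 0 ∉ lam) :
    (straightCells lam).card = lam.sum := by
  have hdec : straightCells lam =
      (Finset.range (Multiset.card lam)).biUnion
        (fun r => (Finset.range (part lam r)).image fun j => (r, j)) := by
    ext c
    simp only [mem_straightCells lam h0, Finset.mem_biUnion, Finset.mem_range,
      Finset.mem_image]
    constructor
    · intro h
      exact ⟨c.1, (part_pos_iff lam h0).1 (by omega), c.2, h, rfl⟩
    · rintro ⟨r, _, j, hj, rfl⟩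
      exact hj
  rw [hdec, Finset.card_biUnion]
  · have : ∀ r, ((Finset.range (part lam r)).image fun j => (r, j)).card = part lam r := by
      intro r
      rw [Finset.card_image_of_injective _ (fun x y h => by simpa using h), Finset.card_range]
    simp only [this]
    have hlen : (lam.sort (· ≥ ·)).length = Multiset.card lam := Multiset.length_sort _
    have := sum_getD (lam.sort (· ≥ ·))
    rw [hlen] at this
    unfold part
    rw [this, ← Multiset.sum_coe, Multiset.sort_eq]
  · intro x _ y _ hxy
    simp only [Finset.disjoint_left, Finset.mem_image, Finset.mem_range]
    rintro c ⟨j, _, rfl⟩ ⟨j', _, h⟩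
    exact hxy ((Prod.ext_iff.1 h).1).symm

/-- partial sums of a composition -/
lemma psum_take_succ (α : List ℕ) {k : ℕ} (hk : k < α.length) :
    (α.take (k+1)).sum = (α.take k).sum + α.getD k 0 := by
  induction α generalizing k with
  | nil => simp at hk
  | cons a α ih =>
    cases k with
    | zero => simp
    | succ k =>
      simp only [List.take_succ_cons, List.sum_cons, List.getD_cons_succ]
      rw [ih (by simpa using hk)]
      omega

lemma psum_take_mono (α : List ℕ) {k k' : ℕ} (h : k ≤ k') :
    (α.take k).sum ≤ (α.take k').sum := by
  have h1 := List.sum_take_add_sum_drop (α.take k') k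
  rw [List.take_take, min_eq_left h] at h1
  omega

lemma psum_take_strict (α : List ℕ) (hpos : ∀ a ∈ α, 0 < a) {k : ℕ} (hk : k < α.length) :
    (α.take k).sum < (α.take (k+1)).sum := by
  rw [psum_take_succ α hk]
  have : α.getD k 0 ∈ α := by
    rw [List.getD_eq_get _ _ ⟨k, hk⟩]
    exact List.get_mem _ _
  have := hpos _ this
  omega

lemma exists_row (α : List ℕ) {m : ℕ} (hm : m < α.sum) :
    ∃ i < α.length, (α.take i).sum ≤ m ∧ m < (α.take (i+1)).sum := by
  by_contra h
  push_neg at h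
  have key : ∀ i ≤ α.length, (α.take i).sum ≤ m := by
    intro i hi
    induction i with
    | zero => simp
    | succ i ih =>
      have h1 := ih (by omega)
      have h2 := h i (by omega) h1
      omega
  have := key α.length (le_refl _)
  rw [List.take_length] at this
  omega

lemma Sset_bounds (α : List ℕ) (hpos : ∀ a ∈ α, 0 < a) {m : ℕ} (hm : m ∈ Sset α) :
    1 ≤ m ∧ m < α.sum := by
  obtain ⟨k, hk0, hkl, hks⟩ := hm
  constructor
  · have hs := psum_take_strict α hpos (k := 0) (by omega)
    have hm2 := psum_take_mono α (show 0 + 1 ≤ k by omega)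
    simp only [List.take_zero, List.sum_nil] at hs
    omega
  · have h1 := psum_take_strict α hpos hkl
    have h2 := psum_take_mono α (show k + 1 ≤ α.length by omega)
    rw [List.take_length] at h2
    omega

lemma mem_Sset_iff (α : List ℕ) (hpos : ∀ a ∈ α, 0 < a) {i m : ℕ} (hi : i < α.length)
    (h1 : (α.take i).sum ≤ m) (h2 : m < (α.take (i+1)).sum) (hm : m + 1 < α.sum) :
    (m + 1 ∈ Sset α) ↔ m + 1 = (α.take (i+1)).sum := by
  constructor
  · rintro ⟨k, hk0, hkl, hks⟩
    have hki : i < k := by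
      by_contra hc
      have := psum_take_mono α (show k ≤ i by omega)
      omega
    have hki' : k ≤ i + 1 := by
      by_contra hc
      have hi1 : i + 1 < α.length := by omega
      have ha := psum_take_strict α hpos hi1
      have := psum_take_mono α (show i + 1 + 1 ≤ k by omega)
      omega
    have : k = i + 1 := by omega
    subst this
    exact hks.symm
  · intro h
    refine ⟨i + 1, by omega, ?_, h.symm⟩
    by_contra hc
    have : α.length ≤ i + 1 := by omega
    have := psum_take_mono α this
    rw [List.take_length] at this
    have := List.take_of_length_le (le_of_eq (by omega) : α.length ≤ i + 1)
    rw [List.take_of_length_le (show α.length ≤ i + 1 by omega)] at h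
    omega

end Gessel
namespace Gessel

lemma skew_mem (R : SkewShape) (c : ℕ × ℕ) :
    c ∈ R.cells ↔ R.inner.rowLen c.1 ≤ c.2 ∧ c.2 < R.outer.rowLen c.1 := by
  obtain ⟨i, j⟩ := c
  simp only [SkewShape.cells, Finset.mem_sdiff, YoungDiagram.mem_cells,
    YoungDiagram.mem_iff_lt_rowLen]
  omega

lemma skew_ab_le (R : SkewShape) (i : ℕ) : R.inner.rowLen i ≤ R.outer.rowLen i := by
  rcases Nat.eq_zero_or_pos (R.inner.rowLen i) with h | h
  · omega
  · have h1 : (i, R.inner.rowLen i - 1) ∈ R.inner := YoungDiagram.mem_iff_lt_rowLen.2 (by omega)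
    have h2 := R.inner_le h1
    rw [YoungDiagram.mem_iff_lt_rowLen] at h2
    omega

lemma skew_mem' (R : SkewShape) (i j : ℕ) :
    (i, j) ∈ R.cells ↔ R.inner.rowLen i ≤ j ∧ j < R.outer.rowLen i := skew_mem R (i, j)

lemma skew_row_filter (R : SkewShape) (i : ℕ) :
    R.cells.filter (fun c => c.1 = i) =
      (Finset.Ico (R.inner.rowLen i) (R.outer.rowLen i)).image (fun j => (i, j)) := by
  ext c
  obtain ⟨p, j⟩ := c
  simp only [Finset.mem_filter, Finset.mem_image, Finset.mem_Ico, skew_mem]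
  constructor
  · rintro ⟨⟨h1, h2⟩, h3⟩
    subst h3
    exact ⟨j, ⟨h1, h2⟩, rfl⟩
  · rintro ⟨j', ⟨h1, h2⟩, h⟩
    obtain ⟨rfl, rfl⟩ : i = p ∧ j' = j := Prod.ext_iff.1 h
    exact ⟨⟨h1, h2⟩, rfl⟩

lemma skew_rowLen_eq (R : SkewShape) (i : ℕ) :
    R.rowLen i = R.outer.rowLen i - R.inner.rowLen i := by
  rw [SkewShape.rowLen, skew_row_filter,
    Finset.card_image_of_injective _ (fun x y h => (Prod.ext_iff.1 h).2), Nat.card_Ico]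

lemma mem_rowSet_iff (R : SkewShape) (i : ℕ) :
    i ∈ R.rowSet ↔ R.inner.rowLen i < R.outer.rowLen i := by
  rw [SkewShape.rowSet]
  simp only [Finset.mem_image]
  constructor
  · rintro ⟨c, hc, rfl⟩
    have := (skew_mem R c).1 hc
    omega
  · intro h
    exact ⟨(i, R.inner.rowLen i), (skew_mem' _ _ _).2 ⟨le_refl _, h⟩, rfl⟩

section Struct

variable {α : List ℕ} {R : SkewShape}

lemma cell_row_lt (hrowSet : R.rowSet = Finset.range α.length) {c : ℕ × ℕ}
    (hc : c ∈ R.cells) : c.1 < α.length := by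
  have : c.1 ∈ R.rowSet := Finset.mem_image_of_mem _ hc
  rw [hrowSet] at this
  exact Finset.mem_range.1 this

lemma row_nonempty (hrowSet : R.rowSet = Finset.range α.length) {i : ℕ} (hi : i < α.length) :
    R.inner.rowLen i < R.outer.rowLen i :=
  (mem_rowSet_iff R i).1 (by rw [hrowSet]; exact Finset.mem_range.2 hi)

lemma row_ab (hrowSet : R.rowSet = Finset.range α.length)
    (hrowLen : ∀ i, i < α.length → R.rowLen i = α.getD i 0) {i : ℕ} (hi : i < α.length) :
    R.outer.rowLen i = R.inner.rowLen i + α.getD i 0 := by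
  have h1 := row_nonempty hrowSet hi
  have h2 := hrowLen i hi
  rw [skew_rowLen_eq] at h2
  omega

lemma overlap (hR : R.Ribbon) (hrowSet : R.rowSet = Finset.range α.length)
    {i : ℕ} (hi : i + 1 < α.length) :
    R.outer.rowLen (i + 1) = R.inner.rowLen i + 1 := by
  have hi0 : i < α.length := by omega
  have hne := row_nonempty hrowSet hi0
  have hne' := row_nonempty hrowSet (show i + 1 < α.length from hi)
  have h1 : R.outer.rowLen (i + 1) ≤ R.inner.rowLen i + 1 := by
    by_contra hc
    push_neg at hc
    have hb : R.outer.rowLen (i + 1) ≤ R.outer.rowLen i := R.outer.rowLen_anti i (i + 1) (by omega)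
    have ha : R.inner.rowLen (i + 1) ≤ R.inner.rowLen i := R.inner.rowLen_anti i (i + 1) (by omega)
    exact hR.2 i (R.inner.rowLen i)
      ⟨(skew_mem' _ _ _).2 ⟨by omega, by omega⟩, (skew_mem' _ _ _).2 ⟨by omega, by omega⟩,
       (skew_mem' _ _ _).2 ⟨by omega, by omega⟩, (skew_mem' _ _ _).2 ⟨by omega, by omega⟩⟩
  have h2 : R.inner.rowLen i < R.outer.rowLen (i + 1) := by
    by_contra hc
    push_neg at hc
    apply hR.1.2
    refine ⟨R.cells.filter (fun c => c.1 ≤ i), R.cells.filter (fun c => ¬ c.1 ≤ i),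
      ?_, ?_, Finset.filter_union_filter_not_eq _ _,
      Finset.disjoint_iff_inter_eq_empty.1 (Finset.disjoint_filter_filter_not _ _ _), ?_⟩
    · exact ⟨(i, R.inner.rowLen i),
        Finset.mem_filter.2 ⟨(skew_mem' _ _ _).2 ⟨le_refl _, hne⟩, le_refl i⟩⟩
    · exact ⟨(i + 1, R.inner.rowLen (i + 1)),
        Finset.mem_filter.2 ⟨(skew_mem' _ _ _).2 ⟨le_refl _, hne'⟩, by omega⟩⟩
    · rintro b hb c hc2
      rw [Finset.mem_filter] at hb hc2
      have hb2 := (skew_mem _ _).1 hb.1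
      have hc3 := (skew_mem _ _).1 hc2.1
      have h3 : R.inner.rowLen i ≤ R.inner.rowLen b.1 := R.inner.rowLen_anti _ _ hb.2
      have h4 : R.outer.rowLen c.1 ≤ R.outer.rowLen (i + 1) :=
        R.outer.rowLen_anti _ _ (by omega)
      exact ⟨by omega, by omega⟩
  omega

lemma psum_outer (hpos : ∀ a ∈ α, 0 < a) (hR : R.Ribbon)
    (hrowSet : R.rowSet = Finset.range α.length)
    (hrowLen : ∀ i, i < α.length → R.rowLen i = α.getD i 0) :
    ∀ i < α.length, (α.take i).sum + R.outer.rowLen i = R.outer.rowLen 0 + i := by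
  intro i
  induction i with
  | zero => simp
  | succ i ih =>
    intro hi
    have h1 := ih (by omega)
    have h2 := row_ab hrowSet hrowLen (show i < α.length by omega)
    have h3 := overlap hR hrowSet hi
    rw [psum_take_succ α (show i < α.length by omega)]
    omega

lemma psum_inner (hpos : ∀ a ∈ α, 0 < a) (hR : R.Ribbon)
    (hrowSet : R.rowSet = Finset.range α.length)
    (hrowLen : ∀ i, i < α.length → R.rowLen i = α.getD i 0) :
    ∀ i < α.length, (α.take (i + 1)).sum + R.inner.rowLen i = R.outer.rowLen 0 + i := by
  intro i hi
  have h1 := psum_outer hpos hR hrowSet hrowLen i hi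
  have h2 := row_ab hrowSet hrowLen hi
  rw [psum_take_succ α hi]
  omega

end Struct

end Gessel
namespace Gessel

/-- reverse reading-order position of a cell in the ribbon -/
def cpos (R : SkewShape) (c : ℕ × ℕ) : ℕ := R.outer.rowLen 0 + c.1 - (c.2 + 1)

/-- the row containing reading position `m` -/
def rIdx (α : List ℕ) (m : ℕ) : ℕ :=
  ((Finset.range α.length).filter fun i => (α.take (i + 1)).sum ≤ m).card

/-- the cell at reading position `m` -/
def cellAt (α : List ℕ) (R : SkewShape) (m : ℕ) : ℕ × ℕ :=
  (rIdx α m, R.outer.rowLen 0 + rIdx α m - (m + 1))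

lemma rIdx_eq {α : List ℕ} {i m : ℕ} (hi : i < α.length)
    (h1 : (α.take i).sum ≤ m) (h2 : m < (α.take (i + 1)).sum) : rIdx α m = i := by
  rw [rIdx]
  have : (Finset.range α.length).filter (fun i' => (α.take (i' + 1)).sum ≤ m) =
      Finset.range i := by
    ext i'
    simp only [Finset.mem_filter, Finset.mem_range]
    constructor
    · rintro ⟨hl, hs⟩
      by_contra hc
      have := psum_take_mono α (show i + 1 ≤ i' + 1 by omega)
      omega
    · intro hlt
      have := psum_take_mono α (show i' + 1 ≤ i by omega)
      exact ⟨by omega, by omega⟩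
  rw [this, Finset.card_range]

section Pos

variable {N : ℕ} {α : List ℕ} {R : SkewShape}

/-- all positional facts about a cell -/
lemma pos_spec (hpos : ∀ a ∈ α, 0 < a) (hsum : α.sum = N) (hR : R.Ribbon)
    (hrowSet : R.rowSet = Finset.range α.length)
    (hrowLen : ∀ i, i < α.length → R.rowLen i = α.getD i 0)
    {i j : ℕ} (hc : (i, j) ∈ R.cells) :
    (α.take i).sum ≤ cpos R (i, j) ∧ cpos R (i, j) < (α.take (i + 1)).sum ∧
      cpos R (i, j) + (j + 1) = R.outer.rowLen 0 + i ∧ cpos R (i, j) < N := by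
  have hi : i < α.length := cell_row_lt hrowSet hc
  have hm := (skew_mem' R i j).1 hc
  have e1 := psum_outer hpos hR hrowSet hrowLen i hi
  have e2 := psum_inner hpos hR hrowSet hrowLen i hi
  have e3 : (α.take (i + 1)).sum ≤ N := by
    have := psum_take_mono α (show i + 1 ≤ α.length by omega)
    rw [List.take_length] at this
    omega
  rw [cpos]
  refine ⟨by omega, by omega, by omega, by omega⟩

lemma cellAt_pos (hpos : ∀ a ∈ α, 0 < a) (hsum : α.sum = N) (hR : R.Ribbon)
    (hrowSet : R.rowSet = Finset.range α.length)
    (hrowLen : ∀ i, i < α.length → R.rowLen i = α.getD i 0)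
    {c : ℕ × ℕ} (hc : c ∈ R.cells) : cellAt α R (cpos R c) = c := by
  obtain ⟨i, j⟩ := c
  obtain ⟨h1, h2, h3, _⟩ := pos_spec hpos hsum hR hrowSet hrowLen hc
  have hi : i < α.length := cell_row_lt hrowSet hc
  have hr : rIdx α (cpos R (i, j)) = i := rIdx_eq hi h1 h2
  rw [cellAt, hr]
  exact Prod.ext rfl (by omega)

lemma cellAt_mem (hpos : ∀ a ∈ α, 0 < a) (hsum : α.sum = N) (hR : R.Ribbon)
    (hrowSet : R.rowSet = Finset.range α.length)
    (hrowLen : ∀ i, i < α.length → R.rowLen i = α.getD i 0)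
    {m : ℕ} (hm : m < N) : cellAt α R m ∈ R.cells ∧ cpos R (cellAt α R m) = m := by
  obtain ⟨i, hi, h1, h2⟩ := exists_row α (show m < α.sum by omega)
  have hr : rIdx α m = i := rIdx_eq hi h1 h2
  have e1 := psum_outer hpos hR hrowSet hrowLen i hi
  have e2 := psum_inner hpos hR hrowSet hrowLen i hi
  rw [cellAt, hr]
  have hmem : (i, R.outer.rowLen 0 + i - (m + 1)) ∈ R.cells :=
    (skew_mem' R _ _).2 ⟨by omega, by omega⟩
  exact ⟨hmem, by rw [cpos]; dsimp only; omega⟩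

lemma reads_iff (hpos : ∀ a ∈ α, 0 < a) (hsum : α.sum = N) (hR : R.Ribbon)
    (hrowSet : R.rowSet = Finset.range α.length)
    (hrowLen : ∀ i, i < α.length → R.rowLen i = α.getD i 0)
    {c d : ℕ × ℕ} (hc : c ∈ R.cells) (hd : d ∈ R.cells) :
    ReadsBefore c d ↔ cpos R c ≤ cpos R d := by
  obtain ⟨i, j⟩ := c
  obtain ⟨i', j'⟩ := d
  obtain ⟨h1, h2, h3, _⟩ := pos_spec hpos hsum hR hrowSet hrowLen hc
  obtain ⟨h1', h2', h3', _⟩ := pos_spec hpos hsum hR hrowSet hrowLen hd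
  rw [ReadsBefore]
  dsimp only
  rcases Nat.lt_trichotomy i i' with h | h | h
  · have := psum_take_mono α (show i + 1 ≤ i' by omega)
    constructor
    · intro _; omega
    · intro _; omega
  · subst h
    constructor
    · rintro (h | ⟨_, h⟩) <;> omega
    · intro hle; right; exact ⟨rfl, by omega⟩
  · have := psum_take_mono α (show i' + 1 ≤ i by omega)
    constructor
    · rintro (hlt | ⟨he, _⟩) <;> omega
    · intro hle; omega

/-- consecutive positions: either next cell to the left in the same row,
or the cell below in the same column (and then position is a partial sum) -/
lemma consecutive (hpos : ∀ a ∈ α, 0 < a) (hsum : α.sum = N) (hR : R.Ribbon)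
    (hrowSet : R.rowSet = Finset.range α.length)
    (hrowLen : ∀ i, i < α.length → R.rowLen i = α.getD i 0)
    {m : ℕ} (hm : m + 1 < N) :
    (((cellAt α R (m + 1)).1 = (cellAt α R m).1 ∧
        (cellAt α R m).2 = (cellAt α R (m + 1)).2 + 1) ∧ (m + 1) ∉ Sset α) ∨
    (((cellAt α R (m + 1)).1 = (cellAt α R m).1 + 1 ∧
        (cellAt α R (m + 1)).2 = (cellAt α R m).2) ∧ (m + 1) ∈ Sset α) := by
  obtain ⟨i, hi, h1, h2⟩ := exists_row α (show m < α.sum by omega)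
  have hr : rIdx α m = i := rIdx_eq hi h1 h2
  have hSset := mem_Sset_iff α hpos hi h1 h2 (by omega)
  rcases Nat.lt_or_ge (m + 1) ((α.take (i + 1)).sum) with hcase | hcase
  · -- same row
    left
    have hr' : rIdx α (m + 1) = i := rIdx_eq hi (by omega) hcase
    have hnot : (m + 1) ∉ Sset α := by
      rw [hSset]
      omega
    refine ⟨⟨?_, ?_⟩, hnot⟩
    · rw [cellAt, cellAt, hr, hr']
    · rw [cellAt, cellAt, hr, hr']
      dsimp only
      have e2 := psum_inner hpos hR hrowSet hrowLen i hi
      omega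
  · -- next row
    right
    have hstep : m + 1 = (α.take (i + 1)).sum := by omega
    have hi1 : i + 1 < α.length := by
      by_contra hc
      have : α.length ≤ i + 1 := by omega
      have := List.take_of_length_le this (l := α)
      rw [this] at hstep
      omega
    have h1' : (α.take (i + 1)).sum ≤ m + 1 := by omega
    have h2' : m + 1 < (α.take (i + 1 + 1)).sum := by
      have := psum_take_strict α hpos hi1
      omega
    have hr' : rIdx α (m + 1) = i + 1 := rIdx_eq hi1 h1' h2'
    refine ⟨⟨?_, ?_⟩, hSset.2 hstep⟩
    · rw [cellAt, cellAt, hr, hr']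
    · rw [cellAt, cellAt, hr, hr']
      dsimp only
      have e2 := psum_inner hpos hR hrowSet hrowLen i hi
      omega

/-- in a ribbon, cells vertically adjacent-or-below in the same column force
the step-by-step structure -/
lemma col_step (hpos : ∀ a ∈ α, 0 < a) (hsum : α.sum = N) (hR : R.Ribbon)
    (hrowSet : R.rowSet = Finset.range α.length)
    (hrowLen : ∀ i, i < α.length → R.rowLen i = α.getD i 0)
    {i i' j : ℕ} (h1 : (i, j) ∈ R.cells) (h2 : (i', j) ∈ R.cells) (h : i < i') :
    (i + 1, j) ∈ R.cells ∧ cpos R (i + 1, j) = cpos R (i, j) + 1 := by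
  have hi' : i' < α.length := cell_row_lt hrowSet h2
  have hi1 : i + 1 < α.length := by omega
  have hov := overlap hR hrowSet hi1
  have hm1 := (skew_mem' R i j).1 h1
  have hm2 := (skew_mem' R i' j).1 h2
  have hb : R.outer.rowLen i' ≤ R.outer.rowLen (i + 1) := R.outer.rowLen_anti _ _ (by omega)
  have hj : j = R.inner.rowLen i := by omega
  have ha : R.inner.rowLen (i + 1) ≤ R.inner.rowLen i := R.inner.rowLen_anti _ _ (by omega)
  have hmem : (i + 1, j) ∈ R.cells := (skew_mem' R _ _).2 ⟨by omega, by omega⟩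
  refine ⟨hmem, ?_⟩
  rw [cpos, cpos]
  dsimp only
  have e1 := psum_inner hpos hR hrowSet hrowLen i (by omega)
  have := pos_spec hpos hsum hR hrowSet hrowLen h1
  rw [cpos] at this
  dsimp only at this
  omega

end Pos

end Gessel
namespace Gessel

/-- the reverse reading word of a filling -/
def wordT (N : ℕ) (α : List ℕ) (R : SkewShape) (T : ℕ × ℕ → ℕ) : ℕ → ℕ :=
  fun m => if m < N then T (cellAt α R m) else 0

/-- the set of lattice words of content `lam` with descent set `S(α)` -/
def WSet (N : ℕ) (α : List ℕ) (lam : Multiset ℕ) : Set (ℕ → ℕ) :=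
  {w | (∀ m, w m ≠ 0 ↔ m < N) ∧
       (∀ r, ((Finset.range N).filter fun m => w m = r + 1).card = part lam r) ∧
       (∀ m < N, ∀ k : ℕ, ((Finset.range (m + 1)).filter fun m' => w m' = k + 2).card ≤
          ((Finset.range (m + 1)).filter fun m' => w m' = k + 1).card) ∧
       (∀ m, m + 1 < N → (w m < w (m + 1) ↔ (m + 1) ∈ Sset α))}

/-- the filling associated to a word -/
def fill (R : SkewShape) (w : ℕ → ℕ) : ℕ × ℕ → ℕ :=
  fun c => if c ∈ R.cells then w (cpos R c) else 0

section Side1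

variable {N : ℕ} {α : List ℕ} {R : SkewShape} {lam : Multiset ℕ}
variable {T : ℕ × ℕ → ℕ} {w : ℕ → ℕ}

lemma pos_lt (hpos : ∀ a ∈ α, 0 < a) (hsum : α.sum = N) (hR : R.Ribbon)
    (hrowSet : R.rowSet = Finset.range α.length)
    (hrowLen : ∀ i, i < α.length → R.rowLen i = α.getD i 0)
    {c : ℕ × ℕ} (hc : c ∈ R.cells) : cpos R c < N := by
  obtain ⟨i, j⟩ := c
  exact (pos_spec hpos hsum hR hrowSet hrowLen hc).2.2.2

lemma count_all (hpos : ∀ a ∈ α, 0 < a) (hsum : α.sum = N) (hR : R.Ribbon)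
    (hrowSet : R.rowSet = Finset.range α.length)
    (hrowLen : ∀ i, i < α.length → R.rowLen i = α.getD i 0) (T : ℕ × ℕ → ℕ) (k : ℕ) :
    (R.cells.filter fun c => T c = k).card =
      ((Finset.range N).filter fun m => wordT N α R T m = k).card := by
  refine Finset.card_bij' (fun c _ => cpos R c) (fun m _ => cellAt α R m) ?_ ?_ ?_ ?_
  · intro c hc
    rw [Finset.mem_filter] at hc ⊢
    have hlt := pos_lt hpos hsum hR hrowSet hrowLen hc.1
    refine ⟨Finset.mem_range.2 hlt, ?_⟩
    rw [wordT]
    rw [if_pos hlt, cellAt_pos hpos hsum hR hrowSet hrowLen hc.1]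
    exact hc.2
  · intro m hm
    rw [Finset.mem_filter, Finset.mem_range] at hm
    obtain ⟨hmem, hp⟩ := cellAt_mem hpos hsum hR hrowSet hrowLen hm.1
    rw [Finset.mem_filter]
    refine ⟨hmem, ?_⟩
    have := hm.2
    rw [wordT, if_pos hm.1] at this
    exact this
  · intro c hc
    rw [Finset.mem_filter] at hc
    exact cellAt_pos hpos hsum hR hrowSet hrowLen hc.1
  · intro m hm
    rw [Finset.mem_filter, Finset.mem_range] at hm
    exact (cellAt_mem hpos hsum hR hrowSet hrowLen hm.1).2

lemma count_prefix (hpos : ∀ a ∈ α, 0 < a) (hsum : α.sum = N) (hR : R.Ribbon)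
    (hrowSet : R.rowSet = Finset.range α.length)
    (hrowLen : ∀ i, i < α.length → R.rowLen i = α.getD i 0) (T : ℕ × ℕ → ℕ) (k : ℕ)
    {d : ℕ × ℕ} (hd : d ∈ R.cells) :
    (R.cells.filter fun c => T c = k ∧ ReadsBefore c d).card =
      ((Finset.range (cpos R d + 1)).filter fun m => wordT N α R T m = k).card := by
  have hdN := pos_lt hpos hsum hR hrowSet hrowLen hd
  refine Finset.card_bij' (fun c _ => cpos R c) (fun m _ => cellAt α R m) ?_ ?_ ?_ ?_
  · intro c hc
    rw [Finset.mem_filter] at hc ⊢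
    have hcc := hc.1
    have hck := hc.2.1
    have hcr := hc.2.2
    have hle : cpos R c ≤ cpos R d := (reads_iff hpos hsum hR hrowSet hrowLen hcc hd).1 hcr
    have hlt : cpos R c < N := pos_lt hpos hsum hR hrowSet hrowLen hcc
    refine ⟨Finset.mem_range.2 (by omega), ?_⟩
    rw [wordT, if_pos hlt, cellAt_pos hpos hsum hR hrowSet hrowLen hcc]
    exact hck
  · intro m hm
    rw [Finset.mem_filter, Finset.mem_range] at hm
    have hmN : m < N := by omega
    obtain ⟨hmem, hp⟩ := cellAt_mem hpos hsum hR hrowSet hrowLen hmN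
    rw [Finset.mem_filter]
    refine ⟨hmem, ?_, ?_⟩
    · have := hm.2
      rw [wordT, if_pos hmN] at this
      exact this
    · rw [reads_iff hpos hsum hR hrowSet hrowLen hmem hd, hp]
      omega
  · intro c hc
    rw [Finset.mem_filter] at hc
    exact cellAt_pos hpos hsum hR hrowSet hrowLen hc.1
  · intro m hm
    rw [Finset.mem_filter, Finset.mem_range] at hm
    exact (cellAt_mem hpos hsum hR hrowSet hrowLen (show m < N by omega)).2

lemma LR_to_W (hpos : ∀ a ∈ α, 0 < a) (hsum : α.sum = N) (hR : R.Ribbon)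
    (hrowSet : R.rowSet = Finset.range α.length)
    (hrowLen : ∀ i, i < α.length → R.rowLen i = α.getD i 0)
    (hT : T ∈ R.LRset lam) : wordT N α R T ∈ WSet N α lam := by
  obtain ⟨⟨⟨hpos1, hrow, hcol⟩, hlr⟩, hzero, hcontent⟩ := hT
  refine ⟨?_, ?_, ?_, ?_⟩
  · intro m
    rw [wordT]
    split_ifs with h
    · have := hpos1 _ (cellAt_mem hpos hsum hR hrowSet hrowLen h).1
      exact ⟨fun _ => h, fun _ => by omega⟩
    · exact ⟨fun hc => absurd rfl hc, fun hc => absurd hc h⟩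
  · intro r
    rw [← count_all hpos hsum hR hrowSet hrowLen T (r + 1)]
    exact hcontent r
  · intro m hm k
    obtain ⟨hmem, hp⟩ := cellAt_mem hpos hsum hR hrowSet hrowLen hm
    have e2 := count_prefix hpos hsum hR hrowSet hrowLen T (k + 2) hmem
    have e1 := count_prefix hpos hsum hR hrowSet hrowLen T (k + 1) hmem
    rw [hp] at e1 e2
    rw [← e1, ← e2]
    exact hlr _ hmem k
  · intro m hm
    have hmN : m < N := by omega
    obtain ⟨hc, hpc⟩ := cellAt_mem hpos hsum hR hrowSet hrowLen hmN
    obtain ⟨hd, hpd⟩ := cellAt_mem hpos hsum hR hrowSet hrowLen hm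
    set c := cellAt α R m with hcdef
    set d := cellAt α R (m + 1) with hddef
    have hw1 : wordT N α R T m = T c := by rw [wordT, if_pos hmN]
    have hw2 : wordT N α R T (m + 1) = T d := by rw [wordT, if_pos hm]
    rw [hw1, hw2]
    rcases consecutive hpos hsum hR hrowSet hrowLen hm with ⟨⟨he1, he2⟩, hnot⟩ | ⟨⟨he1, he2⟩, hin⟩ <;>
      rw [← hcdef, ← hddef] at he1 he2
    · -- same row : T d ≤ T c
      have hd' : d = (c.1, d.2) := Prod.ext he1 rfl
      have hc' : c = (c.1, c.2) := rfl
      have hle : T (c.1, d.2) ≤ T (c.1, c.2) := by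
        refine hrow c.1 d.2 c.2 ?_ ?_ (by omega)
        · rw [← hd']; exact hd
        · rw [Prod.mk.eta]; exact hc
      rw [Prod.mk.eta] at hle
      constructor
      · intro hlt
        rw [hd'] at hlt
        omega
      · intro hSin
        exact absurd hSin hnot
    · -- next row, same column : T c < T d
      have hd' : d = (c.1 + 1, c.2) := Prod.ext he1 he2
      have hlt : T (c.1, c.2) < T (c.1 + 1, c.2) := by
        refine hcol c.1 (c.1 + 1) c.2 (by rw [Prod.mk.eta]; exact hc) ?_ (by omega)
        rw [← hd']; exact hd
      rw [Prod.mk.eta] at hlt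
      exact ⟨fun _ => hin, fun _ => by rw [hd']; exact hlt⟩

lemma LR_id (hpos : ∀ a ∈ α, 0 < a) (hsum : α.sum = N) (hR : R.Ribbon)
    (hrowSet : R.rowSet = Finset.range α.length)
    (hrowLen : ∀ i, i < α.length → R.rowLen i = α.getD i 0)
    (hT : T ∈ R.LRset lam) : fill R (wordT N α R T) = T := by
  funext c
  rw [fill]
  split_ifs with h
  · rw [wordT, if_pos (pos_lt hpos hsum hR hrowSet hrowLen h),
      cellAt_pos hpos hsum hR hrowSet hrowLen h]
  · exact (hT.2.1 c h).symm

end Side1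

end Gessel
namespace Gessel

section Side1b

variable {N : ℕ} {α : List ℕ} {R : SkewShape} {lam : Multiset ℕ} {w : ℕ → ℕ}

lemma W_to_LR (hpos : ∀ a ∈ α, 0 < a) (hsum : α.sum = N) (hR : R.Ribbon)
    (hrowSet : R.rowSet = Finset.range α.length)
    (hrowLen : ∀ i, i < α.length → R.rowLen i = α.getD i 0)
    (hw : w ∈ WSet N α lam) :
    fill R w ∈ R.LRset lam ∧ wordT N α R (fill R w) = w := by
  obtain ⟨hnz, hcont, hlat, hdes⟩ := hw
  have hword : wordT N α R (fill R w) = w := by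
    funext m
    rw [wordT]
    split_ifs with h
    · obtain ⟨hmem, hp⟩ := cellAt_mem hpos hsum hR hrowSet hrowLen h
      rw [fill, if_pos hmem, hp]
    · have : ¬ w m ≠ 0 := fun hc => h ((hnz m).1 hc)
      omega
  have hfc : ∀ c ∈ R.cells, fill R w c = w (cpos R c) := by
    intro c hc
    rw [fill, if_pos hc]
  -- row adjacency
  have hrowadj : ∀ i j : ℕ, (i, j) ∈ R.cells → (i, j + 1) ∈ R.cells →
      fill R w (i, j) ≤ fill R w (i, j + 1) := by
    intro i j h1 h2
    obtain ⟨_, _, e1, hlt1⟩ := pos_spec hpos hsum hR hrowSet hrowLen h1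
    obtain ⟨_, _, e2, _⟩ := pos_spec hpos hsum hR hrowSet hrowLen h2
    set m := cpos R (i, j + 1) with hm
    have hmp : cpos R (i, j) = m + 1 := by omega
    have hm1N : m + 1 < N := by omega
    have hdm := hdes m hm1N
    have hnotS : (m + 1) ∉ Sset α := by
      rcases consecutive hpos hsum hR hrowSet hrowLen hm1N with ⟨_, hnot⟩ | ⟨⟨he1, _⟩, _⟩
      · exact hnot
      · exfalso
        rw [cellAt_pos hpos hsum hR hrowSet hrowLen h2] at he1
        rw [← hmp] at he1
        rw [cellAt_pos hpos hsum hR hrowSet hrowLen h1] at he1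
        dsimp only at he1
        omega
    have hle : w (m + 1) ≤ w m := by
      have : ¬ (w m < w (m + 1)) := fun hc => hnotS (hdm.1 hc)
      omega
    rw [hfc _ h1, hfc _ h2, hmp, ← hm]
    exact hle
  -- general row condition
  have hrowgen : ∀ n i j : ℕ, (i, j) ∈ R.cells → (i, j + n) ∈ R.cells →
      fill R w (i, j) ≤ fill R w (i, j + n) := by
    intro n
    induction n with
    | zero => intro i j h1 h2; exact le_refl _
    | succ n ih =>
      intro i j h1 h2
      have hmid : (i, j + n) ∈ R.cells := by
        have a1 := (skew_mem' R i j).1 h1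
        have a2 := (skew_mem' R i (j + (n + 1))).1 h2
        exact (skew_mem' R i (j + n)).2 ⟨by omega, by omega⟩
      have h2' : (i, j + n + 1) ∈ R.cells := by
        rw [show j + n + 1 = j + (n + 1) by omega]
        exact h2
      calc fill R w (i, j) ≤ fill R w (i, j + n) := ih i j h1 hmid
        _ ≤ fill R w (i, j + n + 1) := hrowadj i (j + n) hmid h2'
        _ = fill R w (i, j + (n + 1)) := by rw [show j + n + 1 = j + (n + 1) by omega]
  -- column adjacency
  have hcoladj : ∀ i j : ℕ, (i, j) ∈ R.cells → (i + 1, j) ∈ R.cells →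
      fill R w (i, j) < fill R w (i + 1, j) := by
    intro i j h1 h2
    obtain ⟨hmem2, hstep⟩ := col_step hpos hsum hR hrowSet hrowLen h1 h2 (by omega)
    set m := cpos R (i, j) with hm
    have hm1N : m + 1 < N := by
      have := pos_lt hpos hsum hR hrowSet hrowLen h2
      omega
    have hdm := hdes m hm1N
    have hinS : (m + 1) ∈ Sset α := by
      rcases consecutive hpos hsum hR hrowSet hrowLen hm1N with ⟨⟨he1, _⟩, _⟩ | ⟨_, hin⟩
      · exfalso
        rw [cellAt_pos hpos hsum hR hrowSet hrowLen h1] at he1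
        rw [← hstep] at he1
        rw [cellAt_pos hpos hsum hR hrowSet hrowLen h2] at he1
        dsimp only at he1
        omega
      · exact hin
    rw [hfc _ h1, hfc _ h2, hstep, ← hm]
    exact hdm.2 hinS
  -- general column condition
  have hcolgen : ∀ n i j : ℕ, (i, j) ∈ R.cells → (i + n + 1, j) ∈ R.cells →
      fill R w (i, j) < fill R w (i + n + 1, j) := by
    intro n
    induction n with
    | zero => intro i j h1 h2; exact hcoladj i j h1 h2
    | succ n ih =>
      intro i j h1 h2
      obtain ⟨hmem2, _⟩ := col_step hpos hsum hR hrowSet hrowLen h1 h2 (by omega)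
      have h2' : (i + 1 + n + 1, j) ∈ R.cells := by
        rw [show i + 1 + n + 1 = i + (n + 1) + 1 by omega]
        exact h2
      calc fill R w (i, j) < fill R w (i + 1, j) := hcoladj i j h1 hmem2
        _ < fill R w (i + 1 + n + 1, j) := ih (i + 1) j hmem2 h2'
        _ = fill R w (i + (n + 1) + 1, j) := by rw [show i + 1 + n + 1 = i + (n + 1) + 1 by omega]
  refine ⟨⟨⟨⟨?_, ?_, ?_⟩, ?_⟩, ?_, ?_⟩, hword⟩
  · -- positivity
    intro c hc
    rw [hfc _ hc]
    have h1 := (hnz (cpos R c)).2 (pos_lt hpos hsum hR hrowSet hrowLen hc)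
    omega
  · -- rows
    intro i j j' h1 h2 hle
    have : j' = j + (j' - j) := by omega
    rw [this] at h2 ⊢
    exact hrowgen (j' - j) i j h1 h2
  · -- columns
    intro i i' j h1 h2 hlt
    have : i' = i + (i' - i - 1) + 1 := by omega
    rw [this] at h2 ⊢
    exact hcolgen (i' - i - 1) i j h1 h2
  · -- LR condition
    intro d hd k
    have e2 := count_prefix (N := N) hpos hsum hR hrowSet hrowLen (fill R w) (k + 2) hd
    have e1 := count_prefix (N := N) hpos hsum hR hrowSet hrowLen (fill R w) (k + 1) hd
    rw [hword] at e1 e2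
    rw [e1, e2]
    exact hlat (cpos R d) (pos_lt hpos hsum hR hrowSet hrowLen hd) k
  · -- zero outside
    intro c hc
    rw [fill, if_neg hc]
  · -- content
    intro i
    rw [SkewShape.content, count_all (N := N) hpos hsum hR hrowSet hrowLen (fill R w) (i + 1),
      hword]
    exact hcont i

end Side1b

end Gessel
namespace Gessel

/-- the unique cell of a SYT carrying entry `k` -/
def entryCell (lam : Multiset ℕ) (U : ℕ × ℕ → ℕ) (k : ℕ) : ℕ × ℕ :=
  ((straightCells lam).filter fun c => U c = k).sum id

/-- the word associated to a SYT: letter `m` is the row (1-based) of entry `m+1` -/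
def wordOf (N : ℕ) (lam : Multiset ℕ) (U : ℕ × ℕ → ℕ) : ℕ → ℕ :=
  fun m => if m < N then (entryCell lam U (m + 1)).1 + 1 else 0

/-- number of earlier occurrences of the letter `r+1` -/
def rankW (N : ℕ) (w : ℕ → ℕ) (r m : ℕ) : ℕ :=
  ((Finset.range N).filter fun m' => w m' = r + 1 ∧ m' < m).card

/-- the SYT associated to a word -/
def tabOf (N : ℕ) (lam : Multiset ℕ) (w : ℕ → ℕ) : ℕ × ℕ → ℕ := fun c =>
  if c ∈ straightCells lam then
    (((Finset.range N).filter fun m => w m = c.1 + 1 ∧ rankW N w c.1 m = c.2).sum id) + 1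
  else 0

section SYT

variable {N : ℕ} {lam : Multiset ℕ} {U : ℕ × ℕ → ℕ} {w : ℕ → ℕ}

lemma entryCell_spec (hU : IsSYT lam U) {k : ℕ} (hk1 : 1 ≤ k) (hk2 : k ≤ lam.sum) :
    entryCell lam U k ∈ straightCells lam ∧ U (entryCell lam U k) = k ∧
      ∀ c ∈ straightCells lam, U c = k → c = entryCell lam U k := by
  obtain ⟨c, hc⟩ := Finset.card_eq_one.1 (hU.2.1 k hk1 hk2)
  have he : entryCell lam U k = c := by
    rw [entryCell, hc, Finset.sum_singleton, id]
  have hcm : c ∈ (straightCells lam).filter fun c => U c = k := hc ▸ Finset.mem_singleton_self c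
  rw [Finset.mem_filter] at hcm
  refine ⟨he ▸ hcm.1, he ▸ hcm.2, ?_⟩
  intro c' hc' hU'
  have : c' ∈ (straightCells lam).filter fun c => U c = k := Finset.mem_filter.2 ⟨hc', hU'⟩
  rw [hc, Finset.mem_singleton] at this
  rw [this, he]

lemma entry_range (hU : IsSYT lam U) (h0 : 0 ∉ lam) {c : ℕ × ℕ}
    (hc : c ∈ straightCells lam) : 1 ≤ U c ∧ U c ≤ lam.sum := by
  set B := (Finset.Icc 1 lam.sum).biUnion
    (fun k => (straightCells lam).filter fun c => U c = k) with hB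
  have hsub : B ⊆ straightCells lam := by
    intro x hx
    rw [hB, Finset.mem_biUnion] at hx
    obtain ⟨k, _, hk⟩ := hx
    exact (Finset.mem_filter.1 hk).1
  have hcard : (straightCells lam).card ≤ B.card := by
    rw [hB, Finset.card_biUnion]
    · have : ∀ k ∈ Finset.Icc 1 lam.sum,
          ((straightCells lam).filter fun c => U c = k).card = 1 := by
        intro k hk
        rw [Finset.mem_Icc] at hk
        exact hU.2.1 k hk.1 hk.2
      rw [Finset.sum_congr rfl this, Finset.sum_const, smul_eq_mul, mul_one, Nat.card_Icc,
        card_straightCells lam h0]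
      omega
    · intro x _ y _ hxy
      rw [Function.onFun, Finset.disjoint_left]
      intro a ha hb
      rw [Finset.mem_filter] at ha hb
      exact hxy (ha.2 ▸ hb.2 ▸ rfl)
  have hBeq : B = straightCells lam := Finset.eq_of_subset_of_card_le hsub hcard
  rw [← hBeq, hB, Finset.mem_biUnion] at hc
  obtain ⟨k, hk, hkc⟩ := hc
  rw [Finset.mem_Icc] at hk
  rw [Finset.mem_filter] at hkc
  omega

lemma rank_lt (hcont : ∀ r, ((Finset.range N).filter fun m => w m = r + 1).card = part lam r)
    {r m : ℕ} (hm : m < N) (hw : w m = r + 1) : rankW N w r m < part lam r := by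
  rw [← hcont r, rankW]
  have hmem : m ∈ (Finset.range N).filter fun m' => w m' = r + 1 :=
    Finset.mem_filter.2 ⟨Finset.mem_range.2 hm, hw⟩
  apply Finset.card_lt_card
  rw [Finset.ssubset_iff_of_subset]
  · exact ⟨m, hmem, by simp⟩
  · intro x hx
    rw [Finset.mem_filter] at hx ⊢
    exact ⟨hx.1, hx.2.1⟩

lemma rank_strictMono {r m m' : ℕ} (hm : m < N) (hwm : w m = r + 1) (h : m < m') :
    rankW N w r m < rankW N w r m' := by
  rw [rankW, rankW]
  apply Finset.card_lt_card
  rw [Finset.ssubset_iff_of_subset]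
  · refine ⟨m, Finset.mem_filter.2 ⟨Finset.mem_range.2 hm, hwm, h⟩, by simp⟩
  · intro x hx
    rw [Finset.mem_filter] at hx ⊢
    exact ⟨hx.1, hx.2.1, by omega⟩

lemma occ_unique {r m m' : ℕ} (hm : m < N) (hm' : m' < N) (hwm : w m = r + 1)
    (hwm' : w m' = r + 1) (hr : rankW N w r m = rankW N w r m') : m = m' := by
  rcases Nat.lt_trichotomy m m' with h | h | h
  · have := rank_strictMono hm hwm h
    omega
  · exact h
  · have := rank_strictMono hm' hwm' h
    omega

lemma occ_exists (hcont : ∀ r, ((Finset.range N).filter fun m => w m = r + 1).card = part lam r)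
    {r j : ℕ} (hj : j < part lam r) :
    ∃ m, m < N ∧ w m = r + 1 ∧ rankW N w r m = j := by
  have := Finset.surj_on_of_inj_on_of_card_le
    (s := (Finset.range N).filter fun m => w m = r + 1)
    (t := Finset.range (part lam r))
    (fun m _ => rankW N w r m) ?_ ?_ ?_
  · obtain ⟨m, hm, hjm⟩ := this j (Finset.mem_range.2 hj)
    rw [Finset.mem_filter, Finset.mem_range] at hm
    exact ⟨m, hm.1, hm.2, hjm.symm⟩
  · intro m hm
    rw [Finset.mem_filter, Finset.mem_range] at hm
    exact Finset.mem_range.2 (rank_lt hcont hm.1 hm.2)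
  · intro m1 m2 h1 h2 he
    rw [Finset.mem_filter, Finset.mem_range] at h1 h2
    exact occ_unique h1.1 h2.1 h1.2 h2.2 he
  · rw [Finset.card_range, hcont r]

lemma tabOf_eq {r j m : ℕ} (hm : m < N) (hw : w m = r + 1) (hr : rankW N w r m = j)
    (hcell : (r, j) ∈ straightCells lam) : tabOf N lam w (r, j) = m + 1 := by
  rw [tabOf, if_pos hcell]
  have : ((Finset.range N).filter fun m' => w m' = (r, j).1 + 1 ∧ rankW N w (r, j).1 m' = (r, j).2)
      = {m} := by
    ext m'
    simp only [Finset.mem_filter, Finset.mem_range, Finset.mem_singleton]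
    constructor
    · rintro ⟨h1, h2, h3⟩
      exact occ_unique h1 hm h2 hw (by rw [h3, hr])
    · rintro rfl
      exact ⟨hm, hw, hr⟩
  rw [this, Finset.sum_singleton, id]

end SYT

end Gessel
namespace Gessel

section Side2

variable {N : ℕ} {α : List ℕ} {lam : Multiset ℕ} {w : ℕ → ℕ}

lemma occ_col
    (hlat : ∀ m < N, ∀ k : ℕ, ((Finset.range (m + 1)).filter fun m' => w m' = k + 2).card ≤
      ((Finset.range (m + 1)).filter fun m' => w m' = k + 1).card)
    {r j m m' : ℕ} (hm : m < N) (hwm : w m = r + 1) (hrm : rankW N w r m = j)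
    (hm' : m' < N) (hwm' : w m' = r + 1 + 1) (hrm' : rankW N w (r + 1) m' = j) : m < m' := by
  by_contra hc
  push_neg at hc
  have hmm' : m' < m := by
    rcases Nat.eq_or_lt_of_le hc with h | h
    · rw [h] at hwm'; omega
    · exact h
  have c2 : ((Finset.range (m' + 1)).filter fun x => w x = r + 2).card = j + 1 := by
    have e2 : (Finset.range (m' + 1)).filter (fun x => w x = r + 2) =
        insert m' ((Finset.range N).filter fun x => w x = r + 1 + 1 ∧ x < m') := by
      ext x
      simp only [Finset.mem_filter, Finset.mem_range, Finset.mem_insert]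
      constructor
      · rintro ⟨h1, h2⟩
        rcases Nat.lt_or_ge x m' with h | h
        · right; exact ⟨by omega, by omega, h⟩
        · left; omega
      · rintro (rfl | ⟨h1, h2, h3⟩)
        · exact ⟨by omega, by omega⟩
        · exact ⟨by omega, by omega⟩
    rw [e2, Finset.card_insert_of_notMem (by simp)]
    rw [rankW] at hrm'
    omega
  have c1 : ((Finset.range (m' + 1)).filter fun x => w x = r + 1).card ≤ j := by
    have hsub : (Finset.range (m' + 1)).filter (fun x => w x = r + 1) ⊆
        (Finset.range N).filter fun x => w x = r + 1 ∧ x < m := by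
      intro x hx
      rw [Finset.mem_filter, Finset.mem_range] at hx ⊢
      exact ⟨by omega, hx.2, by omega⟩
    have := Finset.card_le_card hsub
    rw [rankW] at hrm
    omega
  have := hlat m' hm' r
  omega

lemma W_to_SYT (hpos : ∀ a ∈ α, 0 < a) (hsum : α.sum = N) (hlam : lam.sum = N)
    (h0 : 0 ∉ lam) (hw : w ∈ WSet N α lam) :
    (IsSYT lam (tabOf N lam w) ∧ descentSet lam (tabOf N lam w) = Sset α) ∧
      wordOf N lam (tabOf N lam w) = w := by
  obtain ⟨hnz, hcont, hlat, hdes⟩ := hw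
  have hocc : ∀ m < N, ∃ r j, w m = r + 1 ∧ rankW N w r m = j ∧
      (r, j) ∈ straightCells lam ∧ tabOf N lam w (r, j) = m + 1 := by
    intro m hm
    have h1 : w m ≠ 0 := (hnz m).2 hm
    have hrk := rank_lt hcont hm (show w m = (w m - 1) + 1 by omega)
    have hcell : (w m - 1, rankW N w (w m - 1) m) ∈ straightCells lam :=
      (mem_straightCells lam h0 _).2 hrk
    exact ⟨w m - 1, rankW N w (w m - 1) m, by omega, rfl, hcell,
      tabOf_eq hm (by omega) rfl hcell⟩
  have hcells_val : ∀ i j : ℕ, (i, j) ∈ straightCells lam → ∃ m, m < N ∧ w m = i + 1 ∧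
      rankW N w i m = j ∧ tabOf N lam w (i, j) = m + 1 := by
    intro i j hc
    have hc' := (mem_straightCells lam h0 _).1 hc
    obtain ⟨m, hm, hwm, hrm⟩ := occ_exists hcont hc'
    exact ⟨m, hm, hwm, hrm, tabOf_eq hm hwm hrm hc⟩
  have hsyt : IsSYT lam (tabOf N lam w) := by
    refine ⟨?_, ?_, ?_, ?_⟩
    · intro c hc; rw [tabOf, if_neg hc]
    · intro k hk1 hk2
      rw [hlam] at hk2
      obtain ⟨r, j, hwm, hrm, hcell, htab⟩ := hocc (k - 1) (by omega)
      rw [show k - 1 + 1 = k by omega] at htab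
      rw [Finset.card_eq_one]
      refine ⟨(r, j), ?_⟩
      ext c
      obtain ⟨i, j'⟩ := c
      simp only [Finset.mem_filter, Finset.mem_singleton]
      constructor
      · rintro ⟨hc, htc⟩
        obtain ⟨m', hm', hwm', hrm', htab'⟩ := hcells_val i j' hc
        have hm'k : m' = k - 1 := by omega
        subst hm'k
        have h1 : i = r := by omega
        subst h1
        have h2 : j' = j := by rw [← hrm', hrm]
        rw [h2]
      · intro h
        rw [h]
        exact ⟨hcell, htab⟩
    · -- rows strictly increasing
      intro i j j' hc hc' hlt
      obtain ⟨m, hm, hwm, hrm, htab⟩ := hcells_val i j hc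
      obtain ⟨m', hm', hwm', hrm', htab'⟩ := hcells_val i j' hc'
      rw [htab, htab']
      have : m < m' := by
        rcases Nat.lt_trichotomy m m' with h | h | h
        · exact h
        · subst h; rw [hrm] at hrm'; omega
        · have := rank_strictMono hm' hwm' h
          omega
      omega
    · -- columns strictly increasing
      intro i i' j hc hc' hlt
      have hadj : ∀ p q : ℕ, (p, q) ∈ straightCells lam → (p + 1, q) ∈ straightCells lam →
          tabOf N lam w (p, q) < tabOf N lam w (p + 1, q) := by
        intro p q h1 h2
        obtain ⟨m, hm, hwm, hrm, htab⟩ := hcells_val p q h1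
        obtain ⟨m', hm', hwm', hrm', htab'⟩ := hcells_val (p + 1) q h2
        have := occ_col hlat hm hwm hrm hm' hwm' hrm'
        rw [htab, htab']
        omega
      have hchain : ∀ n p q : ℕ, (p, q) ∈ straightCells lam →
          (p + n + 1, q) ∈ straightCells lam →
          tabOf N lam w (p, q) < tabOf N lam w (p + n + 1, q) := by
        intro n
        induction n with
        | zero => intro p q h1 h2; exact hadj p q h1 h2
        | succ n ih =>
          intro p q h1 h2
          have hmid : (p + 1, q) ∈ straightCells lam := by
            rw [mem_straightCells lam h0] at h2 ⊢
            have hanti := part_anti lam (show p + 1 ≤ p + (n + 1) + 1 by omega)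
            dsimp only at h2 ⊢
            omega
          have h2' : (p + 1 + n + 1, q) ∈ straightCells lam := by
            rw [show p + 1 + n + 1 = p + (n + 1) + 1 by omega]
            exact h2
          calc tabOf N lam w (p, q) < tabOf N lam w (p + 1, q) := hadj p q h1 hmid
            _ < tabOf N lam w (p + 1 + n + 1, q) := ih (p + 1) q hmid h2'
            _ = tabOf N lam w (p + (n + 1) + 1, q) := by
                rw [show p + 1 + n + 1 = p + (n + 1) + 1 by omega]
      have : i' = i + (i' - i - 1) + 1 := by omega
      rw [this] at hc' ⊢
      exact hchain (i' - i - 1) i j hc hc'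
  have hdescent : descentSet lam (tabOf N lam w) = Sset α := by
    ext k
    simp only [descentSet, Set.mem_setOf_eq]
    constructor
    · rintro ⟨c, hc, d, hd, hTc, hTd, hlt⟩
      obtain ⟨m, hm, hwm, hrm, htab⟩ := hcells_val c.1 c.2 (by rw [Prod.mk.eta]; exact hc)
      obtain ⟨m', hm', hwm', hrm', htab'⟩ := hcells_val d.1 d.2 (by rw [Prod.mk.eta]; exact hd)
      rw [Prod.mk.eta] at htab htab'
      have hk : k = m + 1 := by omega
      have hk' : m' = k := by omega
      have hwlt : w (k - 1) < w k := by
        rw [show k - 1 = m by omega, ← hk']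
        omega
      have hiff := hdes (k - 1) (by omega)
      rw [show k - 1 + 1 = k by omega] at hiff
      exact hiff.1 hwlt
    · intro hk
      have hb := Sset_bounds α hpos hk
      have hkN : k < N := by omega
      have h1 := hdes (k - 1) (by omega)
      rw [show k - 1 + 1 = k by omega] at h1
      have hwlt : w (k - 1) < w k := h1.2 hk
      obtain ⟨r, j, hwm, hrm, hcell, htab⟩ := hocc (k - 1) (by omega)
      obtain ⟨r', j', hwm', hrm', hcell', htab'⟩ := hocc k (by omega)
      rw [show k - 1 + 1 = k by omega] at htab
      exact ⟨(r, j), hcell, (r', j'), hcell', htab, htab', by dsimp only; omega⟩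
  refine ⟨⟨hsyt, hdescent⟩, ?_⟩
  funext m
  rw [wordOf]
  split_ifs with h
  · obtain ⟨r, j, hwm, hrm, hcell, htab⟩ := hocc m h
    have := (entryCell_spec hsyt (k := m + 1) (by omega) (by omega)).2.2 (r, j) hcell htab
    rw [← this]
    dsimp only
    omega
  · have : ¬ w m ≠ 0 := fun hc => h ((hnz m).1 hc)
    omega

end Side2

end Gessel
namespace Gessel

section Side2b

variable {N : ℕ} {α : List ℕ} {lam : Multiset ℕ} {U : ℕ × ℕ → ℕ}

lemma SYT_to_W (hpos : ∀ a ∈ α, 0 < a) (hsum : α.sum = N) (hlam : lam.sum = N)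
    (h0 : 0 ∉ lam) (hU : IsSYT lam U) (hdesc : descentSet lam U = Sset α) :
    wordOf N lam U ∈ WSet N α lam := by
  have hspec : ∀ k, 1 ≤ k → k ≤ N → entryCell lam U k ∈ straightCells lam ∧
      U (entryCell lam U k) = k ∧
      ∀ c ∈ straightCells lam, U c = k → c = entryCell lam U k :=
    fun k h1 h2 => entryCell_spec hU h1 (by omega)
  have hent : ∀ c ∈ straightCells lam, 1 ≤ U c ∧ U c ≤ N := by
    intro c hc
    have := entry_range hU h0 hc
    omega
  have hUinj : ∀ c ∈ straightCells lam, ∀ d ∈ straightCells lam, U c = U d → c = d := by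
    intro c hc d hd he
    have h1 := hent c hc
    have h2 := (hspec (U c) (by omega) (by omega)).2.2
    rw [h2 c hc rfl, h2 d hd he.symm]
  refine ⟨?_, ?_, ?_, ?_⟩
  · intro m
    rw [wordOf]
    split_ifs with h
    · exact ⟨fun _ => h, fun _ => by omega⟩
    · exact ⟨fun hc => absurd rfl hc, fun hc => absurd hc h⟩
  · intro r
    have hbij : ((Finset.range N).filter fun m => wordOf N lam U m = r + 1).card =
        (Finset.range (part lam r)).card := by
      refine Finset.card_bij' (fun m _ => (entryCell lam U (m + 1)).2)
        (fun j _ => U (r, j) - 1) ?_ ?_ ?_ ?_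
      · intro m hm
        rw [Finset.mem_filter, Finset.mem_range] at hm
        obtain ⟨hmN, hcond⟩ := hm
        rw [wordOf, if_pos hmN] at hcond
        obtain ⟨hmem, hval, huniq⟩ := hspec (m + 1) (by omega) (by omega)
        rw [mem_straightCells lam h0] at hmem
        have hrow : (entryCell lam U (m + 1)).1 = r := by omega
        rw [hrow] at hmem
        rw [Finset.mem_range]
        omega
      · intro j hj
        rw [Finset.mem_range] at hj
        have hcell : (r, j) ∈ straightCells lam := (mem_straightCells lam h0 _).2 hj
        have hb := hent _ hcell
        rw [Finset.mem_filter, Finset.mem_range]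
        refine ⟨by omega, ?_⟩
        rw [wordOf, if_pos (by omega)]
        have := (hspec (U (r, j)) (by omega) (by omega)).2.2 (r, j) hcell rfl
        rw [show U (r, j) - 1 + 1 = U (r, j) by omega, ← this]
      · intro m hm
        rw [Finset.mem_filter, Finset.mem_range] at hm
        obtain ⟨hmN, hcond⟩ := hm
        rw [wordOf, if_pos hmN] at hcond
        obtain ⟨hmem, hval, huniq⟩ := hspec (m + 1) (by omega) (by omega)
        have hrow : (entryCell lam U (m + 1)).1 = r := by omega
        have : (r, (entryCell lam U (m + 1)).2) = entryCell lam U (m + 1) := by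
          rw [← hrow, Prod.mk.eta]
        rw [this, hval]
        omega
      · intro j hj
        rw [Finset.mem_range] at hj
        have hcell : (r, j) ∈ straightCells lam := (mem_straightCells lam h0 _).2 hj
        have hb := hent _ hcell
        have := (hspec (U (r, j)) (by omega) (by omega)).2.2 (r, j) hcell rfl
        rw [show U (r, j) - 1 + 1 = U (r, j) by omega, ← this]
    rw [hbij, Finset.card_range]
  · intro m hm k
    refine Finset.card_le_card_of_injOn
      (fun m' => U (k, (entryCell lam U (m' + 1)).2) - 1) ?_ ?_
    · intro m' hm'
      dsimp only
      rw [Finset.mem_coe, Finset.mem_filter, Finset.mem_range] at hm'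
      obtain ⟨hm'm, hcond⟩ := hm'
      have hm'N : m' < N := by omega
      rw [wordOf, if_pos hm'N] at hcond
      obtain ⟨hmem, hval, huniq⟩ := hspec (m' + 1) (by omega) (by omega)
      set c := entryCell lam U (m' + 1) with hc
      have hrow : c.1 = k + 1 := by omega
      have hcmem : (k + 1, c.2) ∈ straightCells lam := by
        rw [← hrow, Prod.mk.eta]; exact hmem
      have hcol : c.2 < part lam (k + 1) := by
        have := (mem_straightCells lam h0 _).1 hcmem
        exact this
      have hkcell : (k, c.2) ∈ straightCells lam := by
        rw [mem_straightCells lam h0]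
        have := part_anti lam (show k ≤ k + 1 by omega)
        dsimp only
        omega
      have hb := hent _ hkcell
      have hlt : U (k, c.2) < U (k + 1, c.2) := hU.2.2.2 k (k + 1) c.2 hkcell hcmem (by omega)
      have hUc : U (k + 1, c.2) = m' + 1 := by rw [← hrow, Prod.mk.eta] at hcmem ⊢; rw [hval]
      rw [Finset.mem_coe, Finset.mem_filter, Finset.mem_range]
      refine ⟨by omega, ?_⟩
      rw [wordOf, if_pos (by omega)]
      have := (hspec (U (k, c.2)) (by omega) (by omega)).2.2 (k, c.2) hkcell rfl
      rw [show U (k, c.2) - 1 + 1 = U (k, c.2) by omega, ← this]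
    · intro m1 h1 m2 h2 he
      dsimp only at he
      rw [Finset.coe_filter, Set.mem_setOf_eq, Finset.mem_range] at h1 h2
      obtain ⟨h1N, hcond1⟩ := h1
      obtain ⟨h2N, hcond2⟩ := h2
      have h1N' : m1 < N := by omega
      have h2N' : m2 < N := by omega
      rw [wordOf, if_pos h1N'] at hcond1
      rw [wordOf, if_pos h2N'] at hcond2
      obtain ⟨hmem1, hval1, _⟩ := hspec (m1 + 1) (by omega) (by omega)
      obtain ⟨hmem2, hval2, _⟩ := hspec (m2 + 1) (by omega) (by omega)
      set c1 := entryCell lam U (m1 + 1) with hc1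
      set c2 := entryCell lam U (m2 + 1) with hc2
      have hrow1 : c1.1 = k + 1 := by omega
      have hrow2 : c2.1 = k + 1 := by omega
      have hcmem1 : (k + 1, c1.2) ∈ straightCells lam := by rw [← hrow1, Prod.mk.eta]; exact hmem1
      have hcmem2 : (k + 1, c2.2) ∈ straightCells lam := by rw [← hrow2, Prod.mk.eta]; exact hmem2
      have hkcell1 : (k, c1.2) ∈ straightCells lam := by
        rw [mem_straightCells lam h0]
        have := (mem_straightCells lam h0 _).1 hcmem1
        have := part_anti lam (show k ≤ k + 1 by omega)
        dsimp only at *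
        omega
      have hkcell2 : (k, c2.2) ∈ straightCells lam := by
        rw [mem_straightCells lam h0]
        have := (mem_straightCells lam h0 _).1 hcmem2
        have := part_anti lam (show k ≤ k + 1 by omega)
        dsimp only at *
        omega
      have hb1 := hent _ hkcell1
      have hb2 := hent _ hkcell2
      have heq : U (k, c1.2) = U (k, c2.2) := by omega
      have := hUinj _ hkcell1 _ hkcell2 heq
      have hc12 : c1.2 = c2.2 := (Prod.ext_iff.1 this).2
      have : c1 = c2 := by
        rw [← Prod.mk.eta (p := c1), ← Prod.mk.eta (p := c2), hrow1, hrow2, hc12]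
      have : U c1 = U c2 := by rw [this]
      omega
  · intro m hm1
    have hmN : m < N := by omega
    rw [wordOf, if_pos hmN, wordOf, if_pos hm1]
    rw [show m + 1 + 1 = m + 2 from rfl]
    obtain ⟨hmem1, hval1, huniq1⟩ := hspec (m + 1) (by omega) (by omega)
    obtain ⟨hmem2, hval2, huniq2⟩ := hspec (m + 2) (by omega) (by omega)
    rw [← hdesc]
    constructor
    · intro hlt
      exact ⟨entryCell lam U (m + 1), hmem1, entryCell lam U (m + 2), hmem2, hval1,
        by rw [hval2], by omega⟩
    · rintro ⟨c, hc, d, hd, hUc, hUd, hlt⟩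
      have e1 : c = entryCell lam U (m + 1) := huniq1 c hc hUc
      have e2 : d = entryCell lam U (m + 2) := huniq2 d hd (by omega)
      rw [e1, e2] at hlt
      omega

lemma SYT_id (hlam : lam.sum = N) (h0 : 0 ∉ lam) (hU : IsSYT lam U) :
    tabOf N lam (wordOf N lam U) = U := by
  have hspec : ∀ k, 1 ≤ k → k ≤ N → entryCell lam U k ∈ straightCells lam ∧
      U (entryCell lam U k) = k ∧
      ∀ c ∈ straightCells lam, U c = k → c = entryCell lam U k :=
    fun k h1 h2 => entryCell_spec hU h1 (by omega)
  have hent : ∀ c ∈ straightCells lam, 1 ≤ U c ∧ U c ≤ N := by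
    intro c hc
    have := entry_range hU h0 hc
    omega
  funext c
  by_cases hc : c ∈ straightCells lam
  · obtain ⟨r, j⟩ := c
    have hb := hent _ hc
    set p := U (r, j) with hp
    have hm : p - 1 < N := by omega
    have hwm : wordOf N lam U (p - 1) = r + 1 := by
      rw [wordOf, if_pos hm]
      have := (hspec p (by omega) (by omega)).2.2 (r, j) hc rfl
      rw [show p - 1 + 1 = p by omega, ← this]
    have hrank : rankW N (wordOf N lam U) r (p - 1) = j := by
      rw [rankW]
      have hset : ((Finset.range N).filter fun x => wordOf N lam U x = r + 1 ∧ x < p - 1) =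
          (Finset.range j).image (fun j' => U (r, j') - 1) := by
        ext x
        simp only [Finset.mem_filter, Finset.mem_range, Finset.mem_image]
        constructor
        · rintro ⟨hxN, hxw, hxm⟩
          rw [wordOf, if_pos hxN] at hxw
          obtain ⟨hmem, hval, _⟩ := hspec (x + 1) (by omega) (by omega)
          set e := entryCell lam U (x + 1) with he
          have hrow : e.1 = r := by omega
          have hemem : (r, e.2) ∈ straightCells lam := by rw [← hrow, Prod.mk.eta]; exact hmem
          have hUe : U (r, e.2) = x + 1 := by rw [← hrow, Prod.mk.eta] at hemem ⊢; rw [hval]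
          have hej : e.2 < j := by
            rcases Nat.lt_trichotomy e.2 j with h | h | h
            · exact h
            · exfalso; rw [h] at hUe; omega
            · exfalso
              have := hU.2.2.1 r j e.2 hc hemem h
              omega
          exact ⟨e.2, hej, by omega⟩
        · rintro ⟨j', hj', rfl⟩
          have hjp : j < part lam r := (mem_straightCells lam h0 _).1 hc
          have hcell' : (r, j') ∈ straightCells lam :=
            (mem_straightCells lam h0 _).2 (by dsimp only; omega)
          have hb' := hent _ hcell'
          have hlt : U (r, j') < U (r, j) := hU.2.2.1 r j' j hcell' hc hj'
          refine ⟨by omega, ?_, by omega⟩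
          rw [wordOf, if_pos (by omega)]
          have := (hspec (U (r, j')) (by omega) (by omega)).2.2 (r, j') hcell' rfl
          rw [show U (r, j') - 1 + 1 = U (r, j') by omega, ← this]
      rw [hset, Finset.card_image_of_injOn, Finset.card_range]
      intro j1 h1 j2 h2 he
      dsimp only at he
      rw [Finset.coe_range, Set.mem_Iio] at h1 h2
      have hjp : j < part lam r := (mem_straightCells lam h0 _).1 hc
      have hcell1 : (r, j1) ∈ straightCells lam :=
        (mem_straightCells lam h0 _).2 (by dsimp only; omega)
      have hcell2 : (r, j2) ∈ straightCells lam :=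
        (mem_straightCells lam h0 _).2 (by dsimp only; omega)
      have hb1 := hent _ hcell1
      have hb2 := hent _ hcell2
      rcases Nat.lt_trichotomy j1 j2 with h | h | h
      · have := hU.2.2.1 r j1 j2 hcell1 hcell2 h
        omega
      · exact h
      · have := hU.2.2.1 r j2 j1 hcell2 hcell1 h
        omega
    have := tabOf_eq hm hwm hrank hc
    rw [this]
    omega
  · rw [tabOf, if_neg hc, hU.1 c hc]

end Side2b

end Gessel
/-- Gessel: For a composition `α` of `N` and a partition `lam` of
`N`, the number of LR fillings of the ribbon `rib α` (here: any ribbon `R` whose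
nonempty rows are rows `0, …, α.length − 1` with row `i` of length `αᵢ`) with
content `lam` equals the number of standard Young tableaux of shape `lam` with
descent set `S(α)`; equivalently, `s_{rib α} = Σ_{lam ⊢ N} d_{lam α} s_lam`. -/
theorem gessel_ribbon_expansion (N : ℕ) (α : List ℕ) (hpos : ∀ a ∈ α, 0 < a)
    (hsum : α.sum = N) (R : SkewShape) (hR : R.Ribbon)
    (hrowSet : R.rowSet = Finset.range α.length)
    (hrowLen : ∀ i, i < α.length → R.rowLen i = α.getD i 0)
    (lam : Multiset ℕ) (hlam : lam.sum = N) (h0 : 0 ∉ lam) :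
    (R.LRset lam).ncard =
      Set.ncard {T : ℕ × ℕ → ℕ | IsSYT lam T ∧ descentSet lam T = Sset α} := by
  have key1 : (R.LRset lam).ncard = (Gessel.WSet N α lam).ncard :=
    Gessel.ncard_eq_of_maps _ _ (Gessel.wordT N α R) (Gessel.fill R)
      (fun T hT => Gessel.LR_to_W hpos hsum hR hrowSet hrowLen hT)
      (fun w hw => (Gessel.W_to_LR hpos hsum hR hrowSet hrowLen hw).1)
      (fun T hT => Gessel.LR_id hpos hsum hR hrowSet hrowLen hT)
      (fun w hw => (Gessel.W_to_LR hpos hsum hR hrowSet hrowLen hw).2)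
  have key2 : (Gessel.WSet N α lam).ncard =
      Set.ncard {T : ℕ × ℕ → ℕ | IsSYT lam T ∧ descentSet lam T = Sset α} :=
    Gessel.ncard_eq_of_maps _ _ (Gessel.tabOf N lam) (Gessel.wordOf N lam)
      (fun w hw => (Gessel.W_to_SYT hpos hsum hlam h0 hw).1)
      (fun U hU => Gessel.SYT_to_W hpos hsum hlam h0 hU.1 hU.2)
      (fun w hw => (Gessel.W_to_SYT hpos hsum hlam h0 hw).2)
      (fun U hU => Gessel.SYT_id hlam h0 hU.1)
  rw [key1, key2]
end

section
/- For each N ≥ 1 and each l with 1 ≤ l ≤ N, there exists a connected skew shape A with N boxes and exactly l nonempty rows that is maximal in the support-containment order among connected skew shapes with N boxes; that is, no connected skew shape B with N boxes satisfies supp(A) ⊆ supp(B) and supp(A) ≠ supp(B). -/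
-- Auxiliary development

section Helpers

lemma getD_replicate_nat (n i a : ℕ) :
    (List.replicate n a).getD i 0 = if i < n then a else 0 := by
  induction n generalizing i with
  | zero => simp
  | succ n ih =>
    cases i with
    | zero => simp
    | succ i =>
      rw [List.replicate_succ, List.getD_cons_succ, ih]
      simp only [Nat.succ_lt_succ_iff]

lemma sum_range_getD (L : List ℕ) :
    ∑ i ∈ Finset.range L.length, L.getD i 0 = L.sum := by
  induction L with
  | nil => simp
  | cons a L ih =>
    rw [List.length_cons, Finset.sum_range_succ']
    simp only [List.getD_cons_succ, List.getD_cons_zero, List.sum_cons]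
    omega

/-- The hook partition `(m, 1, 1, …, 1)` with `l-1` ones. -/
def hookM (m l : ℕ) : Multiset ℕ := m ::ₘ Multiset.replicate (l - 1) 1

lemma sort_hookM (m l : ℕ) (hm : 1 ≤ m) :
    (hookM m l).sort (· ≥ ·) = m :: List.replicate (l - 1) 1 := by
  refine (fun h1 h2 => List.Perm.eq_of_pairwise' (r := (· ≥ ·)) (Multiset.pairwise_sort _ _) h2 h1) ?_ ?_
  · rw [← Multiset.coe_eq_coe]
    rw [Multiset.sort_eq]
    rfl
  · rw [List.pairwise_cons]
    constructor
    · intro b hb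
      rw [List.eq_of_mem_replicate hb]; exact hm
    · rw [List.pairwise_replicate]
      right; exact le_refl 1

lemma part_hookM_zero (m l : ℕ) (hm : 1 ≤ m) : part (hookM m l) 0 = m := by
  rw [part, sort_hookM m l hm]; rfl

lemma part_hookM_pos (m l i : ℕ) (hm : 1 ≤ m) (hi : 1 ≤ i) :
    part (hookM m l) i = if i < l then 1 else 0 := by
  rw [part, sort_hookM m l hm]
  obtain ⟨j, rfl⟩ : ∃ j, i = j + 1 := ⟨i - 1, by omega⟩
  rw [List.getD_cons_succ, getD_replicate_nat]
  congr 1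
  simp only [eq_iff_iff]
  omega

lemma zero_not_mem_hookM (m l : ℕ) (hm : 1 ≤ m) : 0 ∉ hookM m l := by
  rw [hookM, Multiset.mem_cons]
  push_neg
  constructor
  · omega
  · intro h
    have := Multiset.eq_of_mem_replicate h
    omega

end Helpers

lemma readsBefore_refl (c : ℕ × ℕ) : ReadsBefore c c := Or.inr ⟨rfl, le_refl _⟩

namespace SkewShape

lemma descent {B : SkewShape} {T : ℕ × ℕ → ℕ} (hLR : B.IsLR T) {c : ℕ × ℕ} {t : ℕ}
    (hc : c ∈ B.cells) (hT : T c = t + 2) :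
    ∃ c' ∈ B.cells, T c' = t + 1 ∧ c'.1 < c.1 := by
  have h := hLR.2 c hc t
  have hpos : 0 < (B.cells.filter fun x => T x = t + 2 ∧ ReadsBefore x c).card := by
    rw [Finset.card_pos]
    exact ⟨c, Finset.mem_filter.mpr ⟨hc, hT, readsBefore_refl c⟩⟩
  have h2 : 0 < (B.cells.filter fun x => T x = t + 1 ∧ ReadsBefore x c).card :=
    lt_of_lt_of_le hpos h
  rw [Finset.card_pos] at h2
  obtain ⟨c', hc'⟩ := h2
  rw [Finset.mem_filter] at hc'
  obtain ⟨hc'm, hT', hRB⟩ := hc'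
  refine ⟨c', hc'm, hT', ?_⟩
  rcases hRB with h1 | ⟨h1, hge⟩
  · exact h1
  · exfalso
    have hrow := hLR.1.2.1 c.1 c.2 c'.2 (by simpa using hc)
      (by rw [← h1]; simpa using hc'm) hge
    simp only [Prod.mk.eta] at hrow
    have heq : (c.1, c'.2) = c' := by
      rw [← h1]
    rw [heq] at hrow
    omega

lemma chain {B : SkewShape} {T : ℕ × ℕ → ℕ} (hLR : B.IsLR T) :
    ∀ (t : ℕ) (c : ℕ × ℕ), c ∈ B.cells → T c = t + 1 →
      t + 1 ≤ (B.rowSet.filter (· ≤ c.1)).card := by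
  intro t
  induction t with
  | zero =>
    intro c hc hT
    have : c.1 ∈ B.rowSet.filter (· ≤ c.1) := by
      rw [Finset.mem_filter]
      exact ⟨Finset.mem_image_of_mem _ hc, le_refl _⟩
    have := Finset.card_pos.mpr ⟨c.1, this⟩
    omega
  | succ t ih =>
    intro c hc hT
    obtain ⟨c', hc'm, hT', hlt⟩ := descent hLR hc hT
    have h1 := ih c' hc'm hT'
    have hsub : insert c.1 (B.rowSet.filter (· ≤ c'.1)) ⊆ B.rowSet.filter (· ≤ c.1) := by
      intro x hx
      rw [Finset.mem_insert] at hx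
      rcases hx with rfl | hx
      · rw [Finset.mem_filter]
        exact ⟨Finset.mem_image_of_mem _ hc, le_refl _⟩
      · rw [Finset.mem_filter] at hx ⊢
        exact ⟨hx.1, by omega⟩
    have hnot : c.1 ∉ B.rowSet.filter (· ≤ c'.1) := by
      rw [Finset.mem_filter]
      push_neg
      intro _
      omega
    have := Finset.card_le_card hsub
    rw [Finset.card_insert_of_notMem hnot] at this
    omega

/-- Any LR content has sum equal to the size of the shape. -/
lemma sum_of_mem_supp {B : SkewShape} {lam : Multiset ℕ} (h : lam ∈ B.supp) :
    lam.sum = B.size := by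
  obtain ⟨h0, T, hLR, hcont⟩ := h
  set K := Multiset.card lam with hK
  have hlen : (lam.sort (· ≥ ·)).length = K := Multiset.length_sort _
  have hpartK : ∀ i, K ≤ i → part lam i = 0 := by
    intro i hi
    rw [part, List.getD_eq_default]
    omega
  have hTmem : ∀ c ∈ B.cells, 1 ≤ T c ∧ T c ≤ K := by
    intro c hc
    have h1 : 1 ≤ T c := hLR.1.1 c hc
    constructor
    · exact h1
    · by_contra hgt
      push_neg at hgt
      have hzero : B.content T (T c) = 0 := by
        obtain ⟨i, hi⟩ : ∃ i, T c = i + 1 := ⟨T c - 1, by omega⟩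
        rw [hi, hcont i, hpartK i (by omega)]
      have : c ∈ B.cells.filter fun x => T x = T c :=
        Finset.mem_filter.mpr ⟨hc, rfl⟩
      have := Finset.card_pos.mpr ⟨c, this⟩
      rw [content] at hzero
      omega
  have hfib : B.cells.card = ∑ i ∈ Finset.range K, (B.cells.filter fun c => T c - 1 = i).card :=
    Finset.card_eq_sum_card_fiberwise (fun c hc => by
      rw [Finset.mem_coe, Finset.mem_range]
      have := hTmem c hc
      omega)
  have hfe : ∀ i ∈ Finset.range K,
      (B.cells.filter fun c => T c - 1 = i).card = (B.cells.filter fun c => T c = i + 1).card := by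
    intro i _
    congr 1
    apply Finset.filter_congr
    intro c hc
    have := (hTmem c hc).1
    constructor <;> intro <;> omega
  rw [Finset.sum_congr rfl hfe] at hfib
  have : ∀ i ∈ Finset.range K, (B.cells.filter fun c => T c = i + 1).card = part lam i := by
    intro i _
    exact hcont i
  rw [Finset.sum_congr rfl this] at hfib
  have hsum : ∑ i ∈ Finset.range K, part lam i = lam.sum := by
    have := sum_range_getD (lam.sort (· ≥ ·))
    rw [hlen] at this
    rw [show (∑ i ∈ Finset.range K, part lam i) = ∑ i ∈ Finset.range K, (lam.sort (· ≥ ·)).getD i 0 from rfl]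
    rw [this, ← Multiset.sum_coe, Multiset.sort_eq]
  rw [size, hfib, hsum]

end SkewShape

namespace SkewShape

lemma numRows_ge_of_hook {B : SkewShape} {m l : ℕ} (hm : 1 ≤ m) (hl : 1 ≤ l)
    (h : hookM m l ∈ B.supp) : l ≤ B.numRows := by
  obtain ⟨h0, T, hLR, hcont⟩ := h
  have hcontl : B.content T ((l - 1) + 1) = part (hookM m l) (l - 1) := hcont (l - 1)
  have hpart : 1 ≤ part (hookM m l) (l - 1) := by
    rcases Nat.eq_or_lt_of_le hl with h1 | h1
    · rw [show l - 1 = 0 by omega, part_hookM_zero m l hm]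
      exact hm
    · rw [part_hookM_pos m l (l - 1) hm (by omega), if_pos (by omega)]
  rw [hcontl.symm, content] at hpart
  have hne : (B.cells.filter fun c => T c = (l - 1) + 1).Nonempty :=
    Finset.card_pos.mp (by omega)
  obtain ⟨c, hc⟩ := hne
  rw [Finset.mem_filter] at hc
  have := chain hLR (l - 1) c hc.1 hc.2
  have hsub := Finset.card_le_card (Finset.filter_subset (· ≤ c.1) B.rowSet)
  rw [numRows]
  omega

lemma numCols_ge_of_hook {B : SkewShape} {m l : ℕ} (hm : 1 ≤ m) (hl : 1 ≤ l)
    (h : hookM m l ∈ B.supp) : m ≤ B.numCols := by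
  obtain ⟨h0, T, hLR, hcont⟩ := h
  have h1 : B.content T 1 = m := by
    have := hcont 0
    rwa [part_hookM_zero m l hm] at this
  classical
  set S := B.cells.filter fun c => T c = 1 with hS
  have hcard : S.card = m := h1
  have hinj : Set.InjOn Prod.snd (S : Set (ℕ × ℕ)) := by
    intro a ha b hb hab
    simp only [hS, Finset.coe_filter, Set.mem_setOf_eq] at ha hb
    rcases lt_trichotomy a.1 b.1 with hlt | heq | hgt
    · exfalso
      have := hLR.1.2.2 a.1 b.1 a.2 (by simpa using ha.1)
        (by rw [hab]; simpa using hb.1) hlt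
      rw [Prod.mk.eta, hab, Prod.mk.eta] at this
      omega
    · exact Prod.ext heq hab
    · exfalso
      have := hLR.1.2.2 b.1 a.1 b.2 (by simpa using hb.1)
        (by rw [← hab]; simpa using ha.1) hgt
      rw [Prod.mk.eta, ← hab, Prod.mk.eta] at this
      omega
  have himg : S.image Prod.snd ⊆ B.colSet := by
    rw [colSet]
    exact Finset.image_subset_image (Finset.filter_subset _ _)
  have := Finset.card_le_card himg
  rw [Finset.card_image_of_injOn hinj, hcard] at this
  exact this

end SkewShape

namespace SkewShape

lemma mem_cells_iff (B : SkewShape) (i j : ℕ) :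
    (i, j) ∈ B.cells ↔ B.inner.rowLen i ≤ j ∧ j < B.outer.rowLen i := by
  rw [cells, Finset.mem_sdiff, YoungDiagram.mem_cells, YoungDiagram.mem_cells,
    YoungDiagram.mem_iff_lt_rowLen, YoungDiagram.mem_iff_lt_rowLen]
  omega

lemma mem_rowSet_iff (B : SkewShape) (i : ℕ) :
    i ∈ B.rowSet ↔ B.inner.rowLen i < B.outer.rowLen i := by
  rw [rowSet, Finset.mem_image]
  constructor
  · rintro ⟨c, hc, rfl⟩
    have := (B.mem_cells_iff c.1 c.2).mp (by simpa using hc)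
    omega
  · intro h
    exact ⟨(i, B.inner.rowLen i), (B.mem_cells_iff _ _).mpr ⟨le_refl _, h⟩, rfl⟩

lemma connected_overlap {B : SkewShape} (hB : B.Connected) {i : ℕ}
    (htop : ∃ i' ∈ B.rowSet, i' ≤ i) (hbot : ∃ i'' ∈ B.rowSet, i + 1 ≤ i'') :
    B.inner.rowLen i < B.outer.rowLen (i + 1) := by
  by_contra hno
  push_neg at hno
  apply hB.2
  classical
  refine ⟨B.cells.filter (fun c => c.1 ≤ i), B.cells.filter (fun c => ¬ c.1 ≤ i),
    ?_, ?_, ?_, ?_, ?_⟩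
  · obtain ⟨i', hi', hle⟩ := htop
    rw [mem_rowSet_iff] at hi'
    exact ⟨(i', B.inner.rowLen i'),
      Finset.mem_filter.mpr ⟨(B.mem_cells_iff _ _).mpr ⟨le_refl _, hi'⟩, hle⟩⟩
  · obtain ⟨i'', hi'', hle⟩ := hbot
    rw [mem_rowSet_iff] at hi''
    exact ⟨(i'', B.inner.rowLen i''),
      Finset.mem_filter.mpr ⟨(B.mem_cells_iff _ _).mpr ⟨le_refl _, hi''⟩, by simp; omega⟩⟩
  · exact Finset.filter_union_filter_not_eq _ _
  · rw [← Finset.disjoint_iff_inter_eq_empty]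
    exact Finset.disjoint_filter_filter_not _ _ _
  · intro b hb c hc
    rw [Finset.mem_filter] at hb hc
    have hbm := (B.mem_cells_iff b.1 b.2).mp (by simpa using hb.1)
    have hcm := (B.mem_cells_iff c.1 c.2).mp (by simpa using hc.1)
    have hb2 := hb.2
    have hc2 := hc.2
    simp only [not_le] at hc2
    have h1 : B.inner.rowLen i ≤ B.inner.rowLen b.1 := B.inner.rowLen_anti b.1 i hb2
    have h2 : B.outer.rowLen c.1 ≤ B.outer.rowLen (i + 1) := B.outer.rowLen_anti (i + 1) c.1 hc2
    constructor <;> omega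

lemma numRows_add_numCols_le {B : SkewShape} (hB : B.Connected) :
    B.numRows + B.numCols ≤ B.size + 1 := by
  classical
  have hne : B.rowSet.Nonempty := hB.1.image Prod.fst
  obtain ⟨i0, hmem0, hmin⟩ : ∃ i0 ∈ B.rowSet, ∀ i ∈ B.rowSet, i0 ≤ i :=
    ⟨B.rowSet.min' hne, B.rowSet.min'_mem hne, fun i hi => Finset.min'_le _ _ hi⟩
  obtain ⟨i1, hmem1, hmax⟩ : ∃ i1 ∈ B.rowSet, ∀ i ∈ B.rowSet, i ≤ i1 :=
    ⟨B.rowSet.max' hne, B.rowSet.max'_mem hne, fun i hi => Finset.le_max' _ _ hi⟩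
  have hi01 : i0 ≤ i1 := hmin i1 hmem1
  have hkey : ∀ i, i0 ≤ i → i < i1 → B.inner.rowLen i < B.outer.rowLen (i + 1) := by
    intro i h1 h2
    exact connected_overlap hB ⟨i0, hmem0, h1⟩ ⟨i1, hmem1, by omega⟩
  have hmid : ∀ i, i0 ≤ i → i ≤ i1 → B.inner.rowLen i < B.outer.rowLen i := by
    intro i h1 h2
    rcases eq_or_lt_of_le h2 with heq | hlt
    · rw [heq]
      exact (mem_rowSet_iff _ _).mp hmem1
    · have ha := hkey i h1 hlt
      have hb := B.outer.rowLen_anti i (i + 1) (by omega)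
      omega
  have hrs : B.rowSet = Finset.Icc i0 i1 := by
    apply Finset.Subset.antisymm
    · intro i hi
      rw [Finset.mem_Icc]
      exact ⟨hmin i hi, hmax i hi⟩
    · intro i hi
      rw [Finset.mem_Icc] at hi
      rw [mem_rowSet_iff]
      exact hmid i hi.1 hi.2
  have hcs : B.colSet ⊆ Finset.Ico (B.inner.rowLen i1) (B.outer.rowLen i0) := by
    intro j hj
    rw [colSet, Finset.mem_image] at hj
    obtain ⟨c, hc, rfl⟩ := hj
    have hcm := (B.mem_cells_iff c.1 c.2).mp (by simpa using hc)
    have hcrow : c.1 ∈ B.rowSet := Finset.mem_image_of_mem _ hc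
    rw [hrs, Finset.mem_Icc] at hcrow
    have h1 := B.inner.rowLen_anti c.1 i1 hcrow.2
    have h2 := B.outer.rowLen_anti i0 c.1 hcrow.1
    rw [Finset.mem_Ico]
    omega
  have hrl : ∀ i, (B.cells.filter fun c => c.1 = i).card
      = B.outer.rowLen i - B.inner.rowLen i := by
    intro i
    have heq : B.cells.filter (fun c => c.1 = i)
        = (Finset.Ico (B.inner.rowLen i) (B.outer.rowLen i)).image (fun j => (i, j)) := by
      ext c
      rw [Finset.mem_filter, Finset.mem_image]
      constructor
      · rintro ⟨hc, h1⟩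
        refine ⟨c.2, ?_, ?_⟩
        · rw [Finset.mem_Ico]
          have := (B.mem_cells_iff c.1 c.2).mp (by simpa using hc)
          rw [h1] at this
          exact this
        · rw [← h1]
      · rintro ⟨j, hj, rfl⟩
        rw [Finset.mem_Ico] at hj
        exact ⟨(B.mem_cells_iff _ _).mpr hj, rfl⟩
    rw [heq, Finset.card_image_of_injOn (fun x _ y _ h => by simpa using h), Nat.card_Ico]
  have hsize : B.size = ∑ i ∈ Finset.Icc i0 i1, (B.outer.rowLen i - B.inner.rowLen i) := by
    rw [size, Finset.card_eq_sum_card_fiberwise (f := Prod.fst) (t := Finset.Icc i0 i1)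
      (fun c hc => by rw [← hrs]; exact Finset.mem_image_of_mem _ hc)]
    exact Finset.sum_congr rfl fun i _ => hrl i
  have htel : ∀ d a : ℕ,
      (∀ i, a ≤ i → i ≤ a + d → B.inner.rowLen i < B.outer.rowLen i) →
      (∀ i, a ≤ i → i < a + d → B.inner.rowLen i < B.outer.rowLen (i + 1)) →
      B.outer.rowLen a + (a + d) ≤
        (∑ i ∈ Finset.Icc a (a + d), (B.outer.rowLen i - B.inner.rowLen i)) + a
          + B.inner.rowLen (a + d) := by
    intro d
    induction d with
    | zero =>
      intro a hmem _
      have h := hmem a (le_refl _) (by omega)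
      rw [show a + 0 = a from rfl, Finset.Icc_self, Finset.sum_singleton]
      omega
    | succ d ih =>
      intro a hmem hov
      have IH := ih a (fun i u v => hmem i u (by omega)) (fun i u v => hov i u (by omega))
      rw [show a + (d + 1) = (a + d) + 1 by omega, Finset.sum_Icc_succ_top (by omega)]
      have h1 := hov (a + d) (by omega) (by omega)
      have h2 := hmem (a + d + 1) (by omega) (by omega)
      omega
  have hT := htel (i1 - i0) i0 (fun i u v => hmid i u (by omega)) (fun i u v => hkey i u (by omega))
  rw [show i0 + (i1 - i0) = i1 by omega] at hT
  have hcols := Finset.card_le_card hcs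
  rw [Nat.card_Ico] at hcols
  have hrows : B.numRows = i1 + 1 - i0 := by rw [numRows, hrs, Nat.card_Icc]
  have hnc : B.numCols = B.colSet.card := rfl
  have hlm : B.inner.rowLen i1 < B.outer.rowLen i0 :=
    lt_of_le_of_lt (B.inner.rowLen_anti i0 i1 hi01) (hmid i0 (le_refl _) hi01)
  rw [hsize]
  omega

end SkewShape

section Hook

/-- The cells of a hook with arm `m` and leg `l`. -/
def hookCells (m l : ℕ) : Finset (ℕ × ℕ) :=
  (Finset.range m).image (fun j => (0, j)) ∪ (Finset.range l).image (fun i => (i, 0))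

lemma mem_hookCells {m l : ℕ} (c : ℕ × ℕ) :
    c ∈ hookCells m l ↔ (c.1 = 0 ∧ c.2 < m) ∨ (c.2 = 0 ∧ c.1 < l) := by
  rw [hookCells, Finset.mem_union, Finset.mem_image, Finset.mem_image]
  constructor
  · rintro (⟨j, hj, rfl⟩ | ⟨i, hi, rfl⟩)
    · left; exact ⟨rfl, by simpa using hj⟩
    · right; exact ⟨rfl, by simpa using hi⟩
  · rintro (⟨h1, h2⟩ | ⟨h1, h2⟩)
    · left
      refine ⟨c.2, by simpa using h2, ?_⟩
      rw [← h1]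
    · right
      refine ⟨c.1, by simpa using h2, ?_⟩
      rw [← h1]

/-- The hook Young diagram. -/
def hookYD (m l : ℕ) : YoungDiagram where
  cells := hookCells m l
  isLowerSet := by
    intro b a hab hb
    simp only [Finset.mem_coe, mem_hookCells] at hb ⊢
    obtain ⟨h1, h2⟩ := hab
    rcases hb with ⟨hb1, hb2⟩ | ⟨hb1, hb2⟩
    · left; constructor <;> omega
    · right; constructor <;> omega

/-- The hook skew shape (with empty inner shape). -/
def hookShape (m l : ℕ) : SkewShape := ⟨hookYD m l, ⊥, bot_le⟩

lemma hookShape_cells (m l : ℕ) : (hookShape m l).cells = hookCells m l := by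
  rw [hookShape, SkewShape.cells]
  rw [show (⊥ : YoungDiagram).cells = ∅ from rfl]
  exact Finset.sdiff_empty

lemma hookShape_size {m l : ℕ} (hm : 1 ≤ m) (hl : 1 ≤ l) :
    (hookShape m l).size = m + l - 1 := by
  rw [SkewShape.size, hookShape_cells, hookCells]
  have h1 : ((Finset.range m).image (fun j => ((0 : ℕ), j))).card = m := by
    rw [Finset.card_image_of_injOn (fun x _ y _ h => by simpa using h)]
    exact Finset.card_range m
  have h2 : ((Finset.range l).image (fun i => (i, (0 : ℕ)))).card = l := by
    rw [Finset.card_image_of_injOn (fun x _ y _ h => by simpa using h)]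
    exact Finset.card_range l
  have hint : (Finset.range m).image (fun j => ((0 : ℕ), j)) ∩
      (Finset.range l).image (fun i => (i, (0 : ℕ))) = {((0 : ℕ), (0 : ℕ))} := by
    ext c
    rw [Finset.mem_inter, Finset.mem_image, Finset.mem_image, Finset.mem_singleton]
    constructor
    · rintro ⟨⟨j, hj, rfl⟩, ⟨i, hi, hie⟩⟩
      rw [Prod.ext_iff] at hie ⊢
      exact ⟨rfl, hie.2.symm⟩
    · rintro rfl
      exact ⟨⟨0, Finset.mem_range.mpr hm, rfl⟩, ⟨0, Finset.mem_range.mpr hl, rfl⟩⟩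
  have := Finset.card_union_add_card_inter ((Finset.range m).image (fun j => ((0 : ℕ), j)))
    ((Finset.range l).image (fun i => (i, (0 : ℕ))))
  rw [h1, h2, hint, Finset.card_singleton] at this
  omega

lemma hookShape_connected {m l : ℕ} (hm : 1 ≤ m) (hl : 1 ≤ l) :
    (hookShape m l).Connected := by
  constructor
  · refine ⟨(0, 0), ?_⟩
    rw [hookShape_cells, mem_hookCells]
    left; exact ⟨rfl, hm⟩
  · rintro ⟨B, C, hBne, hCne, hunion, hinter, hsep⟩
    have h00 : ((0 : ℕ), (0 : ℕ)) ∈ B ∪ C := by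
      rw [hunion, hookShape_cells, mem_hookCells]
      left; exact ⟨rfl, hm⟩
    have hmem : ∀ c ∈ (hookShape m l).cells, c.1 = 0 ∨ c.2 = 0 := by
      intro c hc
      rw [hookShape_cells, mem_hookCells] at hc
      tauto
    rw [Finset.mem_union] at h00
    rcases h00 with h00 | h00
    · obtain ⟨c, hc⟩ := hCne
      have hcc : c ∈ (hookShape m l).cells := by
        rw [← hunion]; exact Finset.mem_union_right _ hc
      have := hsep (0, 0) h00 c hc
      rcases hmem c hcc with h | h
      · exact this.1 h.symm
      · exact this.2 h.symm
    · obtain ⟨c, hc⟩ := hBne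
      have hcc : c ∈ (hookShape m l).cells := by
        rw [← hunion]; exact Finset.mem_union_left _ hc
      have := hsep c hc (0, 0) h00
      rcases hmem c hcc with h | h
      · exact this.1 h
      · exact this.2 h

end Hook

section HookSupp

lemma hook_isLR {m l : ℕ} (hm : 1 ≤ m) (hl : 1 ≤ l) :
    (hookShape m l).IsLR (fun c => c.1 + 1) := by
  constructor
  · refine ⟨fun c _ => by show 1 ≤ c.1 + 1; omega, fun i j j' _ _ _ => le_refl _,
      fun i i' j _ _ h => by show i + 1 < i' + 1; omega⟩
  · intro d hd k
    classical
    set L := (hookShape m l).cells.filter (fun c => c.1 + 1 = k + 2 ∧ ReadsBefore c d) with hL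
    set R := (hookShape m l).cells.filter (fun c => c.1 + 1 = k + 1 ∧ ReadsBefore c d) with hR
    rcases Finset.eq_empty_or_nonempty L with he | hne
    · rw [he]
      simp
    · obtain ⟨c, hc⟩ := hne
      rw [hL, Finset.mem_filter] at hc
      obtain ⟨hcm, hc1, hcRB⟩ := hc
      have hcell := (mem_hookCells c).mp (by rwa [hookShape_cells] at hcm)
      have hc2 : c.2 = 0 ∧ c.1 < l := by
        rcases hcell with ⟨h1, _⟩ | h
        · omega
        · exact h
      have hcRB' : c.1 < d.1 ∨ (c.1 = d.1 ∧ d.2 ≤ c.2) := hcRB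
      have hLsub : L ⊆ {(k + 1, 0)} := by
        intro x hx
        rw [hL, Finset.mem_filter] at hx
        obtain ⟨hxm, hx1, _⟩ := hx
        have hxc := (mem_hookCells x).mp (by rwa [hookShape_cells] at hxm)
        rw [Finset.mem_singleton]
        rcases hxc with ⟨h1, _⟩ | ⟨h1, _⟩
        · exfalso; omega
        · exact Prod.ext (by omega) h1
      have hLcard : L.card ≤ 1 := by
        have := Finset.card_le_card hLsub
        simpa using this
      have hRne : R.Nonempty := by
        cases k with
        | zero =>
          refine ⟨(0, 0), ?_⟩
          rw [hR, Finset.mem_filter]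
          refine ⟨by rw [hookShape_cells]; exact (mem_hookCells _).mpr (Or.inl ⟨rfl, hm⟩),
            rfl, ?_⟩
          exact Or.inl (by rcases hcRB' with h | ⟨h, _⟩ <;> omega)
        | succ k' =>
          refine ⟨(k' + 1, 0), ?_⟩
          rw [hR, Finset.mem_filter]
          have hkl : k' + 1 < l := by omega
          refine ⟨by rw [hookShape_cells]; exact (mem_hookCells _).mpr (Or.inr ⟨rfl, hkl⟩),
            rfl, ?_⟩
          exact Or.inl (by rcases hcRB' with h | ⟨h, _⟩ <;> omega)
      have := Finset.card_pos.mpr hRne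
      omega

lemma hook_content {m l : ℕ} (hm : 1 ≤ m) (hl : 1 ≤ l) :
    ∀ i : ℕ, (hookShape m l).content (fun c => c.1 + 1) (i + 1) = part (hookM m l) i := by
  intro i
  rcases Nat.eq_zero_or_pos i with rfl | hi
  · rw [part_hookM_zero m l hm, SkewShape.content]
    have heq : (hookShape m l).cells.filter (fun c => c.1 + 1 = 0 + 1)
        = (Finset.range m).image (fun j => (0, j)) := by
      ext c
      rw [Finset.mem_filter, hookShape_cells, mem_hookCells, Finset.mem_image]
      constructor
      · rintro ⟨hc, h1⟩
        refine ⟨c.2, ?_, Prod.ext (by omega) rfl⟩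
        rw [Finset.mem_range]
        rcases hc with ⟨_, h⟩ | ⟨h2, h3⟩
        · exact h
        · omega
      · rintro ⟨j, hj, rfl⟩
        exact ⟨Or.inl ⟨rfl, by simpa using hj⟩, rfl⟩
    rw [heq, Finset.card_image_of_injOn (fun x _ y _ h => by simpa using h), Finset.card_range]
  · rw [part_hookM_pos m l i hm hi, SkewShape.content]
    by_cases hil : i < l
    · rw [if_pos hil]
      have heq : (hookShape m l).cells.filter (fun c => c.1 + 1 = i + 1) = {(i, 0)} := by
        ext c
        rw [Finset.mem_filter, hookShape_cells, mem_hookCells, Finset.mem_singleton]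
        constructor
        · rintro ⟨hc, h1⟩
          rcases hc with ⟨h2, _⟩ | ⟨h2, _⟩
          · exfalso; omega
          · exact Prod.ext (by omega) h2
        · rintro rfl
          exact ⟨Or.inr ⟨rfl, hil⟩, rfl⟩
      rw [heq, Finset.card_singleton]
    · rw [if_neg hil]
      have heq : (hookShape m l).cells.filter (fun c => c.1 + 1 = i + 1) = ∅ := by
        rw [Finset.filter_eq_empty_iff]
        intro c hc
        rw [hookShape_cells, mem_hookCells] at hc
        rcases hc with ⟨h2, _⟩ | ⟨h2, h3⟩ <;> omega
      rw [heq, Finset.card_empty]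

lemma hook_mem_supp {m l : ℕ} (hm : 1 ≤ m) (hl : 1 ≤ l) :
    hookM m l ∈ (hookShape m l).supp :=
  ⟨zero_not_mem_hookM m l hm, fun c => c.1 + 1, hook_isLR hm hl, hook_content hm hl⟩

end HookSupp

section Final

lemma supp_subset_partitions {N : ℕ} {B : SkewShape} (hB : B.size = N) :
    B.supp ⊆ Set.range (fun p : Nat.Partition N => p.parts) := by
  intro lam hlam
  have hsum : lam.sum = N := by rw [SkewShape.sum_of_mem_supp hlam, hB]
  have h0 := hlam.1
  refine ⟨⟨lam, fun {i} hi => ?_, hsum⟩, rfl⟩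
  rcases Nat.eq_zero_or_pos i with rfl | h
  · exact absurd hi h0
  · exact h

theorem exists_maximal_connected_with_rows' (N l : ℕ) (hN : 1 ≤ N)
    (hl : 1 ≤ l) (hlN : l ≤ N) :
    ∃ A : SkewShape, A.Connected ∧ A.size = N ∧ A.numRows = l ∧
      ¬ ∃ B : SkewShape, B.Connected ∧ B.size = N ∧ A.supp ⊆ B.supp ∧ A.supp ≠ B.supp := by
  classical
  set m := N + 1 - l with hm
  have hm1 : 1 ≤ m := by omega
  have hml : m + l - 1 = N := by omega
  set F : Set (Set (Multiset ℕ)) :=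
    {S | ∃ B : SkewShape, B.Connected ∧ B.size = N ∧ (hookShape m l).supp ⊆ B.supp ∧
      B.supp = S} with hF
  have hFfin : F.Finite := by
    apply Set.Finite.subset
      (Set.Finite.finite_subsets (Set.finite_range (fun p : Nat.Partition N => p.parts)))
    rintro S ⟨B, hBc, hBs, hsub, rfl⟩
    exact supp_subset_partitions hBs
  have hFne : F.Nonempty :=
    ⟨(hookShape m l).supp, hookShape m l, hookShape_connected hm1 hl,
      by rw [hookShape_size hm1 hl, hml], subset_refl _, rfl⟩
  obtain ⟨S, hSF, hSmax⟩ := Set.Finite.exists_maximalFor id F hFfin hFne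
  obtain ⟨B, hBc, hBs, hsub, rfl⟩ := hSF
  refine ⟨B, hBc, hBs, ?_, ?_⟩
  · have hhook : hookM m l ∈ B.supp := hsub (hook_mem_supp hm1 hl)
    have h1 := SkewShape.numRows_ge_of_hook hm1 hl hhook
    have h2 := SkewShape.numCols_ge_of_hook hm1 hl hhook
    have h3 := SkewShape.numRows_add_numCols_le hBc
    rw [hBs] at h3
    omega
  · rintro ⟨C, hCc, hCs, hsub2, hne⟩
    have hCF : C.supp ∈ F := ⟨C, hCc, hCs, subset_trans hsub hsub2, rfl⟩
    exact hne (le_antisymm hsub2 (hSmax hCF hsub2))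

end Final

/-- For each `N ≥ 1` and each `l` with `1 ≤ l ≤ N`, there exists a
connected skew shape `A` with `N` boxes and exactly `l` nonempty rows that is
maximal in the support-containment order among connected skew shapes with `N`
boxes. -/
theorem exists_maximal_connected_with_rows (N l : ℕ) (hN : 1 ≤ N)
    (hl : 1 ≤ l) (hlN : l ≤ N) :
    ∃ A : SkewShape, A.Connected ∧ A.size = N ∧ A.numRows = l ∧
      ¬ ∃ B : SkewShape, B.Connected ∧ B.size = N ∧ A.supp ⊆ B.supp ∧ A.supp ≠ B.supp := by
  exact exists_maximal_connected_with_rows' N l hN hl hlN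
end
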